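/- arXiv:2403.13533 — 9 statements merged into one kernel-verified Lean document; each statement's English description precedes it below -/
import Mathlib

section
/- If m is a practical number and n is a natural number with n ≤ σ(m) + 1, where σ denotes the sum-of-divisors function, then m·n is a practical number. -/
def Practical (n : ℕ) : Prop :=
  0 < n ∧ ∀ m : ℕ, 0 < m → m ≤ n → ∃ S : Finset ℕ, (∀ d ∈ S, d ∣ n) ∧ ∑ d ∈ S, d = m

lemma complete_seq (T : Finset ℕ)
    (h : ∀ x ∈ T, x ≤ 1 + ∑ y ∈ T.filter (· < x), y) :
    ∀ k, k ≤ ∑ y ∈ T, y → ∃ S ⊆ T, ∑ y ∈ S, y = k := by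
  induction T using Finset.strongInduction with
  | _ T ih =>
    intro k hk
    rcases T.eq_empty_or_nonempty with rfl | hT
    · simp only [Finset.sum_empty, Nat.le_zero] at hk
      exact ⟨∅, Finset.Subset.refl _, by simp [hk]⟩
    · set x := T.max' hT with hx
      have hxT : x ∈ T := T.max'_mem hT
      have hfe : T.filter (· < x) = T.erase x := by
        ext y
        simp only [Finset.mem_filter, Finset.mem_erase]
        constructor
        · rintro ⟨hy, hlt⟩; exact ⟨Nat.ne_of_lt hlt, hy⟩
        · rintro ⟨hne, hy⟩; exact ⟨hy, lt_of_le_of_ne (T.le_max' y hy) hne⟩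
      have hsub : T.erase x ⊂ T := Finset.erase_ssubset hxT
      have hcond : ∀ y ∈ T.erase x,
          y ≤ 1 + ∑ z ∈ (T.erase x).filter (· < y), z := by
        intro y hy
        have hyT : y ∈ T := Finset.mem_of_mem_erase hy
        have hylt : y < x :=
          lt_of_le_of_ne (T.le_max' y hyT) (Finset.ne_of_mem_erase hy)
        have hfeq : T.filter (· < y) = (T.erase x).filter (· < y) := by
          ext z
          simp only [Finset.mem_filter, Finset.mem_erase]
          constructor
          · rintro ⟨hz, hlt⟩; exact ⟨⟨Nat.ne_of_lt (hlt.trans hylt), hz⟩, hlt⟩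
          · rintro ⟨⟨_, hz⟩, hlt⟩; exact ⟨hz, hlt⟩
        have := h y hyT
        rwa [hfeq] at this
      have ih' := ih (T.erase x) hsub hcond
      by_cases hk' : k ≤ ∑ y ∈ T.erase x, y
      · obtain ⟨S, hS, hsum⟩ := ih' k hk'
        exact ⟨S, hS.trans (Finset.erase_subset _ _), hsum⟩
      · push_neg at hk'
        have hxk : x ≤ 1 + ∑ y ∈ T.erase x, y := by
          have := h x hxT
          rwa [hfe] at this
        have hsplit : ∑ y ∈ T, y = x + ∑ y ∈ T.erase x, y := by
          exact (Finset.add_sum_erase T id hxT).symm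
        obtain ⟨S, hS, hsum⟩ := ih' (k - x) (by omega)
        refine ⟨insert x S, ?_, ?_⟩
        · intro z hz
          rcases Finset.mem_insert.mp hz with rfl | hz
          · exact hxT
          · exact Finset.erase_subset _ _ (hS hz)
        · rw [Finset.sum_insert (fun hxS => (Finset.ne_of_mem_erase (hS hxS)) rfl)]
          omega

lemma practical_strong {m : ℕ} (hm : Practical m) :
    ∀ k, k ≤ ∑ d ∈ m.divisors, d → ∃ S ⊆ m.divisors, ∑ d ∈ S, d = k := by
  apply complete_seq
  intro d hd
  have hd' := Nat.mem_divisors.mp hd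
  have hdpos : 0 < d := Nat.pos_of_mem_divisors hd
  rcases Nat.eq_or_lt_of_le hdpos with h1 | h2
  · omega
  · -- d ≥ 2
    have hdm : d ≤ m := Nat.le_of_dvd hm.1 hd'.1
    obtain ⟨S, hSdvd, hSsum⟩ := hm.2 (d - 1) (by omega) (by omega)
    have hSsub : S ⊆ m.divisors.filter (· < d) := by
      intro z hz
      have hzdvd := hSdvd z hz
      have hzpos : 0 < z := Nat.pos_of_dvd_of_pos hzdvd hm.1
      have hzle : z ≤ d - 1 := by
        have : z ≤ ∑ y ∈ S, y :=
          Finset.single_le_sum (f := fun i => i) (fun i _ => Nat.zero_le i) hz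
        omega
      exact Finset.mem_filter.mpr ⟨Nat.mem_divisors.mpr ⟨hzdvd, hm.1.ne'⟩, by omega⟩
    have := Finset.sum_le_sum_of_subset (f := fun i => i) hSsub
    beta_reduce at this
    omega

theorem stmt_1 (m n : ℕ) (hm : Practical m) (hn : 0 < n)
    (h : n ≤ (m.divisors.sum id) + 1) : Practical (m * n) := by
  have hmpos := hm.1
  have hσ : m.divisors.sum id = ∑ d ∈ m.divisors, d := by simp [id]
  refine ⟨Nat.mul_pos hmpos hn, ?_⟩
  intro k hk0 hk
  have hbn : k % n < n := Nat.mod_lt _ hn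
  have ham : k / n ≤ m :=
    Nat.le_of_mul_le_mul_right (le_trans (Nat.div_mul_le_self k n) hk) hn
  have hmσ : m ≤ ∑ d ∈ m.divisors, d :=
    Finset.single_le_sum (fun i (_ : i ∈ m.divisors) => Nat.zero_le i)
      (Nat.mem_divisors.mpr ⟨dvd_refl m, hmpos.ne'⟩)
  obtain ⟨Sa, hSa, hSasum⟩ := practical_strong hm (k / n) (by omega)
  obtain ⟨Sb, hSb, hSbsum⟩ := practical_strong hm (k % n) (by omega)
  have hinj : Set.InjOn (fun d => n * d) Sa := by
    intro x _ y _ hxy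
    exact Nat.eq_of_mul_eq_mul_left hn hxy
  have hdisj : Disjoint Sb (Sa.image (fun d => n * d)) := by
    rw [Finset.disjoint_left]
    intro z hzb hza
    have hz1 : z ≤ k % n := by
      have : z ≤ ∑ d ∈ Sb, d :=
        Finset.single_le_sum (fun i (_ : i ∈ Sb) => Nat.zero_le i) hzb
      omega
    obtain ⟨d, hd, rfl⟩ := Finset.mem_image.mp hza
    have hdpos : 0 < d := Nat.pos_of_mem_divisors (hSa hd)
    have : n ≤ n * d := Nat.le_mul_of_pos_right n hdpos
    omega
  refine ⟨Sb ∪ Sa.image (fun d => n * d), ?_, ?_⟩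
  · intro z hz
    rcases Finset.mem_union.mp hz with hz | hz
    · exact dvd_mul_of_dvd_left (Nat.mem_divisors.mp (hSb hz)).1 n
    · obtain ⟨d, hd, rfl⟩ := Finset.mem_image.mp hz
      have : d ∣ m := (Nat.mem_divisors.mp (hSa hd)).1
      calc n * d ∣ n * m := Nat.mul_dvd_mul_left n this
        _ = m * n := Nat.mul_comm n m
  · rw [Finset.sum_union hdisj, Finset.sum_image (fun x hx y hy => hinj hx hy),
      hSbsum, ← Finset.mul_sum, hSasum]
    have hdm := Nat.div_add_mod k n
    omega
end

section
/- Every positive integer can be written as a sum of a practical number and a triangular number (where 0 is allowed as a triangular number). -/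
open Finset

lemma two_pow_dvd_two_pow_of_mem_bitIndices {a i t : ℕ} (hi : i ∈ t.bitIndices)
    (ht : t < 2 ^ (a + 1)) : 2 ^ i ∣ 2 ^ a := by
  have := (Nat.two_pow_le_of_mem_bitIndices hi).trans_lt ht
  exact pow_dvd_pow 2 (Nat.lt_succ_iff.mp ((Nat.pow_lt_pow_iff_right (by norm_num)).mp this))

lemma practical_two_pow_mul {a q : ℕ} (hq0 : 0 < q) (hq : q ≤ 2 ^ (a + 1)) :
    Practical (2 ^ a * q) := by
  refine ⟨by positivity, fun m _ hm => ?_⟩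
  set S := (m / q).bitIndices.toFinset
  set R := (m % q).bitIndices.toFinset
  have hr : m % q < q := Nat.mod_lt m hq0
  have hs : m / q < 2 ^ (a + 1) :=
    (Nat.div_le_of_le_mul (by rwa [mul_comm])).trans_lt (Nat.pow_lt_pow_succ one_lt_two)
  -- the divisors `2 ^ i * q` are at least `q`, the divisors `2 ^ j` used for `r` are below `q`
  have hdisj : Disjoint (S.image (2 ^ · * q)) (R.image (2 ^ ·)) := by
    simp only [disjoint_left, mem_image, not_exists, not_and]
    rintro _ ⟨i, -, rfl⟩ j hj hji
    have hjr := Nat.two_pow_le_of_mem_bitIndices (List.mem_toFinset.mp hj)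
    have hqi : q ≤ 2 ^ i * q := Nat.le_mul_of_pos_left q (by positivity)
    omega
  refine ⟨S.image (2 ^ · * q) ∪ R.image (2 ^ ·), ?_, ?_⟩
  · simp only [mem_union, mem_image]
    rintro _ (⟨i, hi, rfl⟩ | ⟨j, hj, rfl⟩)
    · exact mul_dvd_mul (two_pow_dvd_two_pow_of_mem_bitIndices (List.mem_toFinset.mp hi) hs)
        dvd_rfl
    · exact dvd_mul_of_dvd_left (two_pow_dvd_two_pow_of_mem_bitIndices
        (List.mem_toFinset.mp hj) (hr.trans_le hq)) q
  · rw [sum_union hdisj,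
      sum_image fun i _ j _ h => Nat.pow_right_injective le_rfl (Nat.eq_of_mul_eq_mul_right hq0 h),
      sum_image fun i _ j _ h => Nat.pow_right_injective le_rfl h,
      ← sum_mul, sum_toFinset_bitIndices_two_pow, sum_toFinset_bitIndices_two_pow]
    exact Nat.div_add_mod' m q

lemma exists_lt_two_pow_mul_succ_modEq (a : ℕ) (r : ℤ) :
    ∃ k : ℕ, k < 2 ^ a ∧ (k * (k + 1) : ℤ) ≡ 2 * r [ZMOD 2 ^ (a + 1)] := by
  induction a with
  | zero => exact ⟨0, by norm_num, Int.modEq_iff_dvd.mpr ⟨r, by ring⟩⟩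
  | succ a ih =>
    obtain ⟨k, hk, hmod⟩ := ih
    obtain ⟨t, ht⟩ := Int.modEq_iff_dvd.mp hmod
    have hk' : k < 2 ^ (a + 1) := hk.trans (Nat.pow_lt_pow_succ one_lt_two)
    rcases Int.even_or_odd t with ⟨u, hu⟩ | ⟨u, hu⟩
    · exact ⟨k, hk', Int.modEq_iff_dvd.mpr ⟨u, by linear_combination ht + 2 ^ (a + 1) * hu⟩⟩
    -- otherwise replace `k` by its reflection `2 ^ (a + 1) - 1 - k`, which shifts `k (k + 1)`
    -- by an odd multiple of `2 ^ (a + 1)`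
    · refine ⟨2 ^ (a + 1) - 1 - k, by rw [pow_succ]; omega, Int.modEq_iff_dvd.mpr ?_⟩
      have hc : ((2 ^ (a + 1) - 1 - k : ℕ) : ℤ) = 2 ^ (a + 1) - 1 - k := by
        have : 1 + k ≤ 2 ^ (a + 1) := by rw [pow_succ]; omega
        rw [Nat.sub_sub, Nat.cast_sub this]
        push_cast
        ring
      refine ⟨u + k + 1 - 2 ^ a, ?_⟩
      rw [hc]
      linear_combination ht + 2 ^ (a + 1) * hu

lemma exists_lt_two_pow_triangle_modEq (a n : ℕ) :
    ∃ k < 2 ^ a, k * (k + 1) / 2 ≡ n [MOD 2 ^ a] := by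
  obtain ⟨k, hk, hmod⟩ := exists_lt_two_pow_mul_succ_modEq a n
  refine ⟨k, hk, ?_⟩
  have htri : ((k * (k + 1) / 2 : ℕ) : ℤ) * 2 = k * (k + 1) := by
    exact_mod_cast Nat.div_mul_cancel (Nat.even_mul_succ_self k).two_dvd
  rw [← Int.natCast_modEq_iff, Int.modEq_iff_dvd]
  rw [Int.modEq_iff_dvd, ← htri, pow_succ] at hmod
  have hdouble : ((n : ℤ) - (k * (k + 1) / 2 : ℕ)) * 2 = 2 * n - (k * (k + 1) / 2 : ℕ) * 2 := by
    ring
  exact (mul_dvd_mul_iff_right two_ne_zero).mp (hdouble ▸ hmod)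

lemma exists_four_pow_le_two_mul_le {n : ℕ} (hn : 0 < n) : ∃ a, 4 ^ a ≤ 2 * n ∧ n ≤ 2 * 4 ^ a :=
  ⟨Nat.log 4 (2 * n), Nat.pow_log_le_self 4 (by omega), by
    have := Nat.lt_pow_succ_log_self (by norm_num : 1 < 4) (2 * n)
    rw [pow_succ] at this
    omega⟩

theorem stmt_3 (n : ℕ) (hn : 0 < n) :
    ∃ p k : ℕ, Practical p ∧ n = p + k * (k + 1) / 2 := by
  obtain ⟨a, hlow, hhigh⟩ := exists_four_pow_le_two_mul_le hn
  have h4 : 4 ^ a = 2 ^ a * 2 ^ a := by rw [← mul_pow]; norm_num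
  obtain ⟨k, hk, hmod⟩ := exists_lt_two_pow_triangle_modEq a n
  have hkk : k * (k + 1) < 2 ^ a * 2 ^ a := Nat.mul_lt_mul_of_lt_of_le hk hk (by positivity)
  have hT : k * (k + 1) / 2 < n := by omega
  obtain ⟨q, hq⟩ := (Nat.modEq_iff_dvd' hT.le).mp hmod
  have hq0 : 0 < q := Nat.pos_of_mul_pos_left (hq ▸ Nat.sub_pos_of_lt hT)
  have hq2 : q ≤ 2 ^ (a + 1) :=
    Nat.le_of_mul_le_mul_left (by rw [← hq, pow_succ, ← mul_assoc, ← h4]; omega) (by positivity)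
  exact ⟨n - k * (k + 1) / 2, k, hq ▸ practical_two_pow_mul hq0 hq2, by omega⟩
end

section
/- Let p be an odd prime, n a natural number, and s a natural number greater than 3. Then there exist natural numbers x and y such that P_s(x) + P_s(y) ≡ n (mod p), where P_s(m) = ((s−2)m² − (s−4)m)/2. -/
def polygonal (s m : ℕ) : ℕ := ((s - 2) * m ^ 2 - (s - 4) * m) / 2

theorem stmt_4 (p : ℕ) (hp : p.Prime) (hodd : Odd p) (n s : ℕ) (hs : 3 < s) :
    ∃ x y : ℕ, polygonal s x + polygonal s y ≡ n [MOD p] := by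
  haveI := Fact.mk hp
  have hp2 : p ≠ 2 := by rintro rfl; exact (Nat.not_odd_iff_even.mpr (by norm_num)) hodd
  have h2 : (2 : ZMod p) ≠ 0 := by
    have : ((2 : ℕ) : ZMod p) ≠ 0 := by
      rw [Ne, ZMod.natCast_eq_zero_iff]
      intro h
      have h1 := Nat.le_of_dvd (by norm_num) h
      have h3 := hp.two_le
      omega
    simpa using this
  set d : ZMod p := (s : ZMod p) - 2 with hdef
  set e : ZMod p := (s : ZMod p) - 4 with hedef
  -- main claim
  have main : ∀ c : ZMod p, ∃ a b : ZMod p,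
      (d * a ^ 2 - e * a) + (d * b ^ 2 - e * b) = c := by
    intro c
    have hed : e = d - 2 := by rw [hdef, hedef]; ring
    by_cases hd : d = 0
    · refine ⟨c * 2⁻¹, 0, ?_⟩
      have h22 : (2 : ZMod p) * 2⁻¹ = 1 := mul_inv_cancel₀ h2
      linear_combination ((c * 2⁻¹) ^ 2 - c * 2⁻¹) * hd + (-(c * 2⁻¹)) * hed + c * h22
    · have h2d : (2 : ZMod p) * d ≠ 0 := mul_ne_zero h2 hd
      set t : ZMod p := e * (2 * d)⁻¹ with htdef
      have h2dt : 2 * d * t = e := by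
        rw [htdef, mul_comm e, ← mul_assoc, mul_inv_cancel₀ h2d, one_mul]
      obtain ⟨u, v, huv⟩ := ZMod.sq_add_sq p ((c - 2 * (d * t ^ 2 - e * t)) * d⁻¹)
      have hw : d * (u ^ 2 + v ^ 2) = c - 2 * (d * t ^ 2 - e * t) := by
        rw [huv, mul_comm d, mul_assoc, inv_mul_cancel₀ hd, mul_one]
      exact ⟨u + t, v + t, by linear_combination hw + (u + v) * h2dt⟩
  -- relation between polygonal and the quadratic over ZMod p
  have hpoly : ∀ m : ℕ, (2 * polygonal s m : ZMod p) =
      d * (m : ZMod p) ^ 2 - e * (m : ZMod p) := by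
    intro m
    have hm : m ≤ m ^ 2 := Nat.le_self_pow (by norm_num) m
    have hle : (s - 4) * m ≤ (s - 2) * m ^ 2 :=
      Nat.mul_le_mul (by omega) hm
    obtain ⟨k, hk⟩ : 2 ∣ m ^ 2 - m :=
      ((Nat.even_sub hm).mpr (by simp [Nat.even_pow])).two_dvd
    have hdvd : 2 ∣ (s - 2) * m ^ 2 - (s - 4) * m := by
      refine ⟨(s - 4) * k + m ^ 2, ?_⟩
      have hk' : (m : ℤ) ^ 2 - m = 2 * k := by
        have := hk
        zify [hm] at this
        linarith
      zify [hle, hm, show 2 ≤ s by omega, show 4 ≤ s by omega]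
      linear_combination ((s : ℤ) - 4) * hk'
    have h1 : 2 * polygonal s m = (s - 2) * m ^ 2 - (s - 4) * m := by
      unfold polygonal
      exact Nat.mul_div_cancel' hdvd
    have : ((2 * polygonal s m : ℕ) : ZMod p) =
        (((s - 2) * m ^ 2 - (s - 4) * m : ℕ) : ZMod p) := by rw [h1]
    rw [Nat.cast_sub hle] at this
    push_cast at this
    rw [Nat.cast_sub (by omega : 2 ≤ s), Nat.cast_sub (by omega : 4 ≤ s)] at this
    push_cast at this
    rw [hdef, hedef]
    linear_combination this
  obtain ⟨a, b, hab⟩ := main (2 * (n : ZMod p))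
  refine ⟨a.val, b.val, ?_⟩
  have hx : ((a.val : ℕ) : ZMod p) = a := by simp [ZMod.natCast_val, ZMod.cast_id]
  have hy : ((b.val : ℕ) : ZMod p) = b := by simp [ZMod.natCast_val, ZMod.cast_id]
  have ea := hpoly a.val
  have eb := hpoly b.val
  rw [hx] at ea
  rw [hy] at eb
  apply (ZMod.natCast_eq_natCast_iff _ _ _).mp
  apply mul_left_cancel₀ h2
  push_cast at ea eb ⊢
  linear_combination ea + eb + hab
end

section
/- Let p be an odd prime not dividing s−2, where s > 3, and let n be a natural number. Then the set of residues {P_s(i) mod p : 1 ≤ i ≤ p} has exactly (p+1)/2 elements, where P_s(m) = ((s−2)m² − (s−4)m)/2. -/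
/-!
Since `2` and `s - 2` are units mod `p`, `P_s` is a quadratic polynomial over `ZMod p` with
nonzero leading coefficient, and `1, …, p` run through all of `ZMod p`. Completing the square
makes its value set an affine image of the set of squares, which has `(p + 1) / 2` elements
because `x ↦ x ^ 2` is two-to-one on the nonzero elements.
-/

open Finset

-- For `s < 4` the truncated `s - 4 = 0` makes `polygonal s` differ from `P_s`.
theorem two_mul_polygonal_add {s : ℕ} (hs : 4 ≤ s) (m : ℕ) :
    2 * polygonal s m + (s - 4) * m = (s - 2) * m ^ 2 := by
  have hle : (s - 4) * m ≤ (s - 2) * m ^ 2 :=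
    Nat.mul_le_mul (by omega) (Nat.le_self_pow two_ne_zero m)
  have heven : Even ((s - 2) * m ^ 2 - (s - 4) * m) := by
    obtain ⟨t, rfl⟩ : ∃ t, s = t + 4 := ⟨s - 4, by omega⟩
    rw [Nat.even_sub hle, show t + 4 - 2 = t + 2 by omega, show t + 4 - 4 = t by omega]
    simp [Nat.even_mul, Nat.even_pow, Nat.even_add]
  unfold polygonal
  rw [Nat.mul_div_cancel' heven.two_dvd, Nat.sub_add_cancel hle]

theorem cast_polygonal {K : Type*} [Field K] (h2 : (2 : K) ≠ 0) {s : ℕ} (hs : 4 ≤ s)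
    (m : ℕ) :
    (polygonal s m : K) = (s - 2) / 2 * m ^ 2 + -(s - 4) / 2 * m := by
  have h := congrArg (Nat.cast : ℕ → K) (two_mul_polygonal_add hs m)
  push_cast [Nat.cast_sub (show 2 ≤ s by omega), Nat.cast_sub hs] at h
  field_simp
  linear_combination h

theorem ZMod.image_natCast_Icc_one (n : ℕ) [NeZero n] :
    (Icc 1 n).image (Nat.cast : ℕ → ZMod n) = univ := by
  refine eq_univ_of_forall fun x => mem_image.mpr ?_
  by_cases hx : x = 0
  · exact ⟨n, mem_Icc.mpr ⟨Nat.one_le_iff_ne_zero.mpr (NeZero.ne n), le_rfl⟩, by simp [hx]⟩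
  · refine ⟨x.val, mem_Icc.mpr ⟨?_, x.val_lt.le⟩, ZMod.natCast_zmod_val x⟩
    rwa [Nat.one_le_iff_ne_zero, Ne, ZMod.val_eq_zero]

section FiniteField

variable {F : Type*} [Field F] [Fintype F] [DecidableEq F]

theorem card_image_sq_of_ringChar_ne_two (hF : ringChar F ≠ 2) :
    #(univ.image fun x : F => x ^ 2) = (Fintype.card F + 1) / 2 := by
  have hfiber : ∀ b ∈ (univ.erase 0).image (fun x : F => x ^ 2),
      #{x ∈ univ.erase (0 : F) | x ^ 2 = b} = 2 := by
    intro b hb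
    obtain ⟨y, hy, rfl⟩ := mem_image.mp hb
    have hy0 : y ≠ 0 := ne_of_mem_erase hy
    have hsqrts : {x ∈ univ.erase (0 : F) | x ^ 2 = y ^ 2} = {y, -y} := by
      ext x
      simp only [mem_filter, mem_erase, mem_univ, and_true, mem_insert, mem_singleton,
        sq_eq_sq_iff_eq_or_eq_neg]
      constructor
      · exact And.right
      · rintro (rfl | rfl) <;> simp [hy0]
    rw [hsqrts]
    exact card_pair (Ne.symm (mt (Ring.eq_self_iff_eq_zero_of_char_ne_two hF).mp hy0))
  have hnonzero : #(univ.erase (0 : F)) = 2 * #((univ.erase 0).image fun x : F => x ^ 2) := by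
    rw [card_eq_sum_card_image (fun x : F => x ^ 2), sum_const_nat hfiber, mul_comm]
  have hsplit : univ.image (fun x : F => x ^ 2)
      = insert 0 ((univ.erase 0).image fun x : F => x ^ 2) := by
    conv_lhs => rw [← insert_erase (mem_univ (0 : F)), image_insert]
    rw [zero_pow two_ne_zero]
  rw [card_erase_of_mem (mem_univ 0), card_univ] at hnonzero
  rw [hsplit, card_insert_of_notMem (by simp)]
  have := Fintype.card_pos (α := F)
  omega

theorem card_image_quadratic (hF : ringChar F ≠ 2) {a : F} (ha : a ≠ 0) (b : F) :
    #(univ.image fun x : F => a * x ^ 2 + b * x) = #(univ.image fun x : F => x ^ 2) := by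
  have h2 : (2 : F) ≠ 0 := Ring.two_ne_zero hF
  have hsquare : (fun x : F => a * x ^ 2 + b * x)
      = (fun y => a * y - a * (b / (2 * a)) ^ 2) ∘ (fun x => x ^ 2) ∘
          (fun x => x + b / (2 * a)) := by
    funext x
    simp only [Function.comp_apply]
    field_simp
    ring
  rw [hsquare, ← image_image, ← image_image, image_univ_of_surjective (add_right_surjective _),
    card_image_of_injective _ fun y z h => mul_left_cancel₀ ha (sub_left_inj.mp h)]

end FiniteField

theorem stmt_5_general (p : ℕ) (hp : p.Prime) (hodd : Odd p) (s : ℕ) (hs : 3 < s)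
    (hps : ¬ p ∣ (s - 2)) :
    ((Finset.Icc 1 p).image (fun i => polygonal s i % p)).card = (p + 1) / 2 := by
  have : Fact p.Prime := ⟨hp⟩
  have hchar : ringChar (ZMod p) ≠ 2 := by
    rw [ZMod.ringChar_zmod_n]
    rintro rfl
    exact Nat.not_odd_iff_even.mpr even_two hodd
  have ha : ((s : ZMod p) - 2) / 2 ≠ 0 := by
    refine div_ne_zero ?_ (Ring.two_ne_zero hchar)
    rwa [← Nat.cast_ofNat, ← Nat.cast_sub (by omega), Ne, ZMod.natCast_eq_zero_iff]
  set f : ZMod p → ZMod p :=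
    fun x => ((s : ZMod p) - 2) / 2 * x ^ 2 + -((s : ZMod p) - 4) / 2 * x
  calc #((Icc 1 p).image fun i => polygonal s i % p)
      = #((((Icc 1 p).image (Nat.cast : ℕ → ZMod p)).image f).image ZMod.val) := by
        rw [image_image, image_image]
        congr 1
        refine image_congr fun i _ => ?_
        simp only [Function.comp_apply, f, ← cast_polygonal (Ring.two_ne_zero hchar) hs,
          ZMod.val_natCast]
    _ = #(univ.image f) := by
        rw [ZMod.image_natCast_Icc_one, card_image_of_injective _ (ZMod.val_injective p)]
    _ = #(univ.image fun x : ZMod p => x ^ 2) := card_image_quadratic hchar ha _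
    _ = (p + 1) / 2 := by rw [card_image_sq_of_ringChar_ne_two hchar, ZMod.card]

theorem stmt_5 (p : ℕ) (hp : p.Prime) (hodd : Odd p) (s : ℕ) (hs : 3 < s)
    (hps : ¬ p ∣ (s - 2)) (n : ℕ) :
    ((Finset.Icc 1 p).image (fun i => polygonal s i % p)).card = (p + 1) / 2 :=
  stmt_5_general p hp hodd s hs hps
end

section
/- Let s > 3 be a natural number and let p be a prime with p ≡ 1 (mod 4) and p ∤ (s−2). Then for all natural numbers k and n, there exist natural numbers x and y such that P_s(x) + P_s(y) ≡ n (mod p^k), where P_s(m) = ((s−2)m² − (s−4)m)/2. -/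
lemma polygonal_key (s m : ℕ) (hs : 3 < s) :
    2 * polygonal s m + (s - 4) * m = (s - 2) * m ^ 2 := by
  obtain ⟨r, rfl⟩ : ∃ r, s = r + 4 := ⟨s - 4, by omega⟩
  have h1 : r + 4 - 2 = r + 2 := by omega
  have h2 : r + 4 - 4 = r := by omega
  unfold polygonal
  rw [h1, h2]
  have hm : m ≤ m ^ 2 := Nat.le_self_pow two_ne_zero m
  have hBA : r * m ≤ (r + 2) * m ^ 2 :=
    le_trans (Nat.mul_le_mul_left r hm) (Nat.mul_le_mul_right _ (by omega))
  have hsq : 2 ∣ m ^ 2 - m := by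
    rcases m with _ | j
    · simp
    · have he : (j + 1) ^ 2 - (j + 1) = j * (j + 1) := by
        have : (j + 1) ^ 2 = j * (j + 1) + (j + 1) := by ring
        omega
      rw [he]
      exact (Nat.even_mul_succ_self j).two_dvd
  have key : (r + 2) * m ^ 2 - r * m = r * (m ^ 2 - m) + 2 * m ^ 2 := by
    zify [hm, hBA]; ring
  have hdvd : 2 ∣ (r + 2) * m ^ 2 - r * m := by
    rw [key]
    exact dvd_add (Dvd.dvd.mul_left hsq r) ⟨m ^ 2, rfl⟩
  rw [Nat.mul_div_cancel' hdvd, Nat.sub_add_cancel hBA]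

lemma sq_neg_one_mod_pow (p : ℕ) (hp : p.Prime) (h1 : p % 4 = 1) :
    ∀ k : ℕ, ∃ i : ℤ, ((p : ℤ)) ^ k ∣ i ^ 2 + 1 := by
  haveI : Fact p.Prime := ⟨hp⟩
  intro k
  induction k with
  | zero => exact ⟨0, by norm_num⟩
  | succ k ih =>
    obtain ⟨i, a, ha⟩ := ih
    rcases Nat.eq_zero_or_pos k with rfl | hk
    · -- base case: k+1 = 1
      obtain ⟨z, hz⟩ := ZMod.exists_sq_eq_neg_one_iff.mpr (by omega : p % 4 ≠ 3)
      refine ⟨(z.val : ℤ), ?_⟩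
      rw [pow_one, ← ZMod.intCast_zmod_eq_zero_iff_dvd]
      push_cast
      have hzz : ((z.val : ℕ) : ZMod p) = z := by
        simp [ZMod.natCast_val, ZMod.cast_id]
      rw [hzz]
      rw [sq]
      rw [← hz]
      ring
    · obtain ⟨j, rfl⟩ : ∃ j, k = j + 1 := ⟨k - 1, by omega⟩
      -- i² ≡ -1 mod p
      set ii : ZMod p := (i : ZMod p) with hii
      have hiisq : ii ^ 2 = -1 := by
        have hdvd1 : (p : ℤ) ∣ i ^ 2 + 1 :=
          dvd_trans (dvd_pow_self _ (by omega : j + 1 ≠ 0)) ⟨a, ha⟩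
        have h0 : ((i ^ 2 + 1 : ℤ) : ZMod p) = 0 := by
          rw [ZMod.intCast_zmod_eq_zero_iff_dvd]
          exact_mod_cast hdvd1
        push_cast at h0
        linear_combination h0
      have hne : (2 * ii : ZMod p) ≠ 0 := by
        intro h0
        have h4 : ((4 : ℕ) : ZMod p) = 0 := by
          have : (2 * ii) ^ 2 = 0 := by rw [h0]; ring
          have h4' : (-4 : ZMod p) = 0 := by
            calc (-4 : ZMod p) = 4 * ii ^ 2 := by rw [hiisq]; ring
            _ = (2 * ii) ^ 2 := by ring
            _ = 0 := this
          have : (4 : ZMod p) = 0 := by linear_combination -h4'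
          exact_mod_cast this
        rw [ZMod.natCast_eq_zero_iff] at h4
        have := Nat.le_of_dvd (by norm_num) h4
        have := hp.two_le
        omega
      set M : ZMod p := (-(a : ZMod p)) * (2 * ii)⁻¹ with hM
      set m : ℤ := (M.val : ℤ) with hm
      have hdvd : (p : ℤ) ∣ a + 2 * i * m := by
        rw [← ZMod.intCast_zmod_eq_zero_iff_dvd, hm]
        push_cast
        have hMM : ((M.val : ℕ) : ZMod p) = M := by
          simp [ZMod.natCast_val, ZMod.cast_id]
        rw [hMM, ← hii, hM]
        have h2i := mul_inv_cancel₀ hne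
        linear_combination (-(a : ZMod p)) * h2i
      obtain ⟨b, hb⟩ := hdvd
      refine ⟨i + m * (p : ℤ) ^ (j + 1), b + m ^ 2 * (p : ℤ) ^ j, ?_⟩
      linear_combination ha + (p : ℤ) ^ (j + 1) * hb

theorem stmt_9 (s : ℕ) (hs : 3 < s) (p : ℕ) (hp : p.Prime) (h1 : p % 4 = 1)
    (hps : ¬ p ∣ (s - 2)) (k n : ℕ) :
    ∃ x y : ℕ, polygonal s x + polygonal s y ≡ n [MOD p ^ k] := by
  haveI : Fact p.Prime := ⟨hp⟩
  set q := p ^ k with hq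
  haveI : NeZero q := ⟨pow_ne_zero k hp.pos.ne'⟩
  -- units
  have hp2 : p ≠ 2 := by rintro rfl; omega
  have hc2 : Nat.Coprime 2 q := ((Nat.coprime_primes Nat.prime_two hp).mpr (Ne.symm hp2)).pow_right k
  have h2 : IsUnit (2 : ZMod q) := by
    have := (ZMod.isUnit_iff_coprime 2 q).mpr hc2
    simpa using this
  have ht : IsUnit (((s - 2 : ℕ)) : ZMod q) :=
    (ZMod.isUnit_iff_coprime _ q).mpr
      (((hp.coprime_iff_not_dvd).mpr hps).symm.pow_right k)
  set T : ZMod q := ((s - 2 : ℕ) : ZMod q) with hT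
  set R : ZMod q := ((s - 4 : ℕ) : ZMod q) with hR
  -- square root of -1
  obtain ⟨i0, hi0⟩ := sq_neg_one_mod_pow p hp h1 k
  set I : ZMod q := (i0 : ZMod q) with hI0
  have hI : I ^ 2 = -1 := by
    have h0 : ((i0 ^ 2 + 1 : ℤ) : ZMod q) = 0 := by
      rw [ZMod.intCast_zmod_eq_zero_iff_dvd, hq]
      push_cast
      exact hi0
    push_cast at h0
    linear_combination h0
  -- every element is a sum of two squares
  obtain ⟨c, hc⟩ := h2.exists_right_inv
  set a : ZMod q := 8 * T * (n : ZMod q) + 2 * R ^ 2 with hadef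
  set u : ZMod q := (a + 1) * c with hu
  set v : ZMod q := (a - 1) * c * I with hv
  have huv : u ^ 2 + v ^ 2 = a := by
    rw [hu, hv]
    linear_combination ((a - 1) * c) ^ 2 * hI + (a * (2 * c + 1)) * hc
  -- inverse of 2T
  obtain ⟨e, he⟩ := (h2.mul ht).exists_right_inv
  have he' : 2 * T * e = 1 := he
  set x : ZMod q := (u + R) * e with hx
  set y : ZMod q := (v + R) * e with hy
  have hmain : T * x ^ 2 - R * x + (T * y ^ 2 - R * y) = 2 * (n : ZMod q) := by
    have hkey : (2 * T) * ((2 * T) * (T * x ^ 2 - R * x + (T * y ^ 2 - R * y)))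
        = (2 * T) * ((2 * T) * (2 * (n : ZMod q))) := by
      rw [hx, hy]
      linear_combination T * huv +
        (T * ((u + R) ^ 2 + (v + R) ^ 2) * (2 * T * e + 1) - 2 * T * R * (u + v + 2 * R)) * he'
    exact (h2.mul ht).mul_left_cancel ((h2.mul ht).mul_left_cancel hkey)
  refine ⟨x.val, y.val, ?_⟩
  rw [← ZMod.natCast_eq_natCast_iff]
  push_cast
  have hxv : ((x.val : ℕ) : ZMod q) = x := by simp [ZMod.natCast_val, ZMod.cast_id]
  have hyv : ((y.val : ℕ) : ZMod q) = y := by simp [ZMod.natCast_val, ZMod.cast_id]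
  apply h2.mul_left_cancel
  have L2 : ∀ m : ℕ, (2 : ZMod q) * (polygonal s m : ZMod q) + R * (m : ZMod q)
      = T * (m : ZMod q) ^ 2 := by
    intro m
    have := polygonal_key s m hs
    have hcast := congrArg (fun z : ℕ => (z : ZMod q)) this
    push_cast at hcast
    rw [hT, hR]
    exact_mod_cast hcast
  have L2x := L2 x.val
  have L2y := L2 y.val
  rw [hxv] at L2x
  rw [hyv] at L2y
  linear_combination L2x + L2y + hmain
end

section
/- If q is a practical number not divisible by 3 and not divisible by 4, then q = 1 or q = 2. -/
theorem stmt_11 (q : ℕ) (hq : Practical q) (h3 : ¬ 3 ∣ q) (h4 : ¬ 4 ∣ q) :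
    q = 1 ∨ q = 2 := by
  by_contra h
  push_neg at h
  have hq0 := hq.1
  have hne3 : q ≠ 3 := fun he => h3 (by rw [he])
  have hq4 : 4 ≤ q := by omega
  obtain ⟨S, hS, hsum⟩ := hq.2 4 (by norm_num) hq4
  have hsub : S ⊆ {1, 2} := by
    intro d hd
    have hdvd := hS d hd
    have hle : d ≤ 4 := hsum ▸ Finset.single_le_sum (fun i _ => Nat.zero_le i) hd
    have h0 : d ≠ 0 := by
      rintro rfl
      have := Nat.eq_zero_of_zero_dvd hdvd
      omega
    have hd3 : d ≠ 3 := fun he => h3 (he ▸ hdvd)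
    have hd4 : d ≠ 4 := fun he => h4 (he ▸ hdvd)
    simp only [Finset.mem_insert, Finset.mem_singleton]
    omega
  have hle : ∑ d ∈ S, d ≤ ∑ d ∈ ({1, 2} : Finset ℕ), d :=
    Finset.sum_le_sum_of_subset hsub
  simp at hle
  omega
end

section
/- For every natural number s > 3, there exists a natural number N(s) such that every natural number greater than N(s) can be written as a sum of a practical number and two s-gonal numbers (where 0 counts as an s-gonal number). -/
namespace Stmt12

open Finset

/-- Sum of divisors. -/
def Sg (n : ℕ) : ℕ := ∑ d ∈ n.divisors, d

lemma Sg_ge_self {n : ℕ} (hn : 0 < n) : n ≤ Sg n := by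
  refine Finset.single_le_sum (f := fun d => d) (fun i _ => Nat.zero_le i) ?_
  simp [Nat.mem_divisors, hn.ne']

lemma complete_subsetsum (F : Finset ℕ)
    (hF : ∀ d ∈ F, d ≤ 1 + ∑ e ∈ F.filter (fun e => e < d), e) :
    ∀ v, v ≤ ∑ e ∈ F, e → ∃ T, T ⊆ F ∧ ∑ e ∈ T, e = v := by
  induction F using Finset.strongInduction with
  | _ F IH =>
    intro v hv
    rcases Nat.eq_zero_or_pos v with rfl | hvpos
    · exact ⟨∅, by simp⟩
    have hFne : F.Nonempty := by
      rcases Finset.eq_empty_or_nonempty F with rfl | h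
      · simp at hv; omega
      · exact h
    set M := F.max' hFne with hM
    have hMF : M ∈ F := F.max'_mem hFne
    have hsum : ∑ e ∈ F, e = M + ∑ e ∈ F.erase M, e := (Finset.add_sum_erase F _ hMF).symm
    have hssub : F.erase M ⊂ F := Finset.erase_ssubset hMF
    have hfilt : ∀ d ∈ F.erase M, F.filter (fun e => e < d) = (F.erase M).filter (fun e => e < d) := by
      intro d hd
      apply Finset.ext
      intro e
      simp only [Finset.mem_filter, Finset.mem_erase]
      constructor
      · rintro ⟨heF, hed⟩
        refine ⟨⟨?_, heF⟩, hed⟩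
        have hdM : d ≤ M := F.le_max' d (Finset.mem_of_mem_erase hd)
        have : e < M := lt_of_lt_of_le hed hdM
        omega
      · rintro ⟨⟨_, heF⟩, hed⟩; exact ⟨heF, hed⟩
    have hF' : ∀ d ∈ F.erase M, d ≤ 1 + ∑ e ∈ (F.erase M).filter (fun e => e < d), e := by
      intro d hd
      rw [← hfilt d hd]
      exact hF d (Finset.mem_of_mem_erase hd)
    rcases le_or_gt M v with hMv | hvM
    · -- use M
      obtain ⟨T', hT'sub, hT'sum⟩ := IH (F.erase M) hssub hF' (v - M) (by omega)
      have hMT' : M ∉ T' := fun h => (Finset.mem_erase.mp (hT'sub h)).1 rfl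
      refine ⟨insert M T', ?_, ?_⟩
      · intro x hx
        rcases Finset.mem_insert.mp hx with rfl | hx
        · exact hMF
        · exact Finset.mem_of_mem_erase (hT'sub hx)
      · rw [Finset.sum_insert hMT', hT'sum]; omega
    · -- v < M
      have hle : v ≤ ∑ e ∈ F.erase M, e := by
        have h1 : M ≤ 1 + ∑ e ∈ F.filter (fun e => e < M), e := hF M hMF
        have h2 : F.filter (fun e => e < M) ⊆ F.erase M := by
          intro e he
          simp only [Finset.mem_filter] at he
          exact Finset.mem_erase.mpr ⟨by omega, he.1⟩
        have h3 : ∑ e ∈ F.filter (fun e => e < M), e ≤ ∑ e ∈ F.erase M, e :=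
          Finset.sum_le_sum_of_subset h2
        omega
      obtain ⟨T', hT'sub, hT'sum⟩ := IH (F.erase M) hssub hF' v hle
      exact ⟨T', fun x hx => Finset.mem_of_mem_erase (hT'sub hx), hT'sum⟩

lemma practical_rep_sigma {n : ℕ} (hn : Practical n) :
    ∀ v, v ≤ Sg n → ∃ S : Finset ℕ, (∀ d ∈ S, d ∣ n) ∧ ∑ d ∈ S, d = v := by
  intro v hv
  have hnpos := hn.1
  have hhyp : ∀ d ∈ n.divisors, d ≤ 1 + ∑ e ∈ n.divisors.filter (fun e => e < d), e := by
    intro d hd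
    have hdpos : 0 < d := Nat.pos_of_mem_divisors hd
    rcases Nat.eq_or_lt_of_le hdpos with h1 | h2
    · omega
    · -- d ≥ 2
      have hdn : d ≤ n := Nat.le_of_dvd hnpos (Nat.mem_divisors.mp hd).1
      obtain ⟨S, hSdvd, hSsum⟩ := hn.2 (d - 1) (by omega) (by omega)
      have hSsub : S ⊆ n.divisors.filter (fun e => e < d) := by
        intro e he
        have hedvd := hSdvd e he
        have hepos : 0 < e := by
          rcases Nat.eq_zero_or_pos e with rfl | h
          · exact absurd (Nat.eq_zero_of_zero_dvd hedvd) hnpos.ne'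
          · exact h
        have hele : e ≤ d - 1 := by
          rw [← hSsum]
          exact Finset.single_le_sum (f := fun x => x) (fun i _ => Nat.zero_le i) he
        exact Finset.mem_filter.mpr ⟨Nat.mem_divisors.mpr ⟨hedvd, hnpos.ne'⟩, by omega⟩
      have h4 : ∑ e ∈ S, e ≤ ∑ e ∈ n.divisors.filter (fun e => e < d), e :=
        Finset.sum_le_sum_of_subset hSsub
      rw [hSsum] at h4
      omega
  obtain ⟨T, hTsub, hTsum⟩ := complete_subsetsum n.divisors hhyp v hv
  exact ⟨T, fun d hd => (Nat.mem_divisors.mp (hTsub hd)).1, hTsum⟩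

lemma practical_one : Practical 1 := by
  refine ⟨one_pos, fun m hm1 hm2 => ⟨{1}, by simp, ?_⟩⟩
  simp only [Finset.sum_singleton]
  omega

lemma practical_mul {m t : ℕ} (hm : Practical m) (ht : 0 < t) (hts : t ≤ Sg m + 1) :
    Practical (m * t) := by
  have hmpos := hm.1
  refine ⟨Nat.mul_pos hmpos ht, fun v hv1 hv2 => ?_⟩
  obtain ⟨q, r, hvqr, hrt⟩ : ∃ q r : ℕ, t * q + r = v ∧ r < t :=
    ⟨v / t, v % t, Nat.div_add_mod v t, Nat.mod_lt _ ht⟩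
  have hqm : q ≤ m := by nlinarith
  obtain ⟨S1, hS1dvd, hS1sum⟩ := practical_rep_sigma hm r (by omega)
  obtain ⟨S2, hS2dvd, hS2sum⟩ : ∃ S : Finset ℕ, (∀ d ∈ S, d ∣ m) ∧ ∑ d ∈ S, d = q := by
    rcases Nat.eq_zero_or_pos q with rfl | hqpos
    · exact ⟨∅, by simp, by simp⟩
    · exact hm.2 q hqpos hqm
  have hS1lt : ∀ d ∈ S1, d < t := by
    intro d hd
    have : d ≤ r := by
      rw [← hS1sum]
      exact Finset.single_le_sum (f := fun x => x) (fun i _ => Nat.zero_le i) hd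
    omega
  have hS2pos : ∀ d ∈ S2, 0 < d := by
    intro d hd
    rcases Nat.eq_zero_or_pos d with rfl | h
    · exact absurd (Nat.eq_zero_of_zero_dvd (hS2dvd 0 hd)) hmpos.ne'
    · exact h
  set S2' := S2.image (fun d => t * d) with hS2'
  have hdisj : Disjoint S1 S2' := by
    rw [Finset.disjoint_left]
    intro x hx1 hx2
    obtain ⟨d, hd, rfl⟩ := Finset.mem_image.mp hx2
    have h1 := hS1lt _ hx1
    have h2 := hS2pos d hd
    nlinarith
  have hinj : Set.InjOn (fun d => t * d) S2 := by
    intro a _ b _ hab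
    exact Nat.eq_of_mul_eq_mul_left ht hab
  refine ⟨S1 ∪ S2', fun d hd => ?_, ?_⟩
  · rcases Finset.mem_union.mp hd with h | h
    · exact Dvd.dvd.mul_right (hS1dvd d h) t
    · obtain ⟨e, he, rfl⟩ := Finset.mem_image.mp h
      rw [mul_comm m t]
      exact Nat.mul_dvd_mul_left t (hS2dvd e he)
  · rw [Finset.sum_union hdisj, hS1sum, hS2', Finset.sum_image hinj, ← Finset.mul_sum, hS2sum]
    omega

/-- `Qp s x = polygonal s x` for `s ≥ 4`, subtraction-free form. -/
def Qp (s x : ℕ) : ℕ := (s - 2) * (x * (x - 1) / 2) + x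

lemma two_mul_Qp (s x : ℕ) : 2 * Qp s x = (s - 2) * (x * (x - 1)) + 2 * x := by
  have hev : 2 * (x * (x - 1) / 2) = x * (x - 1) := by
    rcases x with _ | y
    · simp
    · rw [Nat.succ_sub_one]
      have h := Nat.even_mul_succ_self y
      rw [mul_comm] at h
      exact Nat.two_mul_div_two_of_even h
  unfold Qp
  rw [Nat.mul_add, mul_left_comm, hev]

lemma polygonal_eq {s : ℕ} (hs : 4 ≤ s) (x : ℕ) : polygonal s x = Qp s x := by
  obtain ⟨k, rfl⟩ : ∃ k, s = k + 4 := ⟨s - 4, by omega⟩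
  have key : (k + 4 - 2) * x ^ 2 - (k + 4 - 4) * x = 2 * Qp (k + 4) x := by
    rw [two_mul_Qp]
    rcases x with _ | y
    · simp
    · have h1 : (k + 4 - 2) = k + 2 := by omega
      have h2 : (k + 4 - 4) = k := by omega
      rw [h1, h2, Nat.succ_sub_one]
      have h4 : (k + 2) * (y + 1) ^ 2 = k * (y + 1) + ((k + 2) * ((y + 1) * y) + 2 * (y + 1)) := by
        ring
      omega
  unfold polygonal
  rw [key]
  omega

lemma cast_two_Qp (s x M : ℕ) :
    ((2 * Qp s x : ℕ) : ZMod M) =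
      ((s - 2 : ℕ) : ZMod M) * (x : ZMod M) ^ 2 + (2 - ((s - 2 : ℕ) : ZMod M)) * (x : ZMod M) := by
  rw [two_mul_Qp]
  rcases x with _ | y
  · simp
  · rw [Nat.succ_sub_one]
    push_cast
    ring

lemma Qp_congr_odd {s M A α : ℕ} (hModd : ¬ 2 ∣ M) (h : A ≡ α [MOD M]) :
    Qp s A ≡ Qp s α [MOD M] := by
  have h2 : 2 * Qp s A ≡ 2 * Qp s α [MOD M] := by
    rw [← ZMod.natCast_eq_natCast_iff] at h ⊢
    rw [cast_two_Qp, cast_two_Qp, h]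
  exact Nat.ModEq.cancel_left_of_coprime
    (Nat.coprime_comm.mp (Nat.Prime.coprime_iff_not_dvd Nat.prime_two |>.mpr hModd)) h2

lemma Qp_congr_two {s A α : ℕ} (h : A ≡ α [MOD 4]) : Qp s A ≡ Qp s α [MOD 2] := by
  have h2 : 2 * Qp s A ≡ 2 * Qp s α [MOD 4] := by
    rw [← ZMod.natCast_eq_natCast_iff] at h ⊢
    rw [cast_two_Qp, cast_two_Qp, h]
  have h3 := Nat.ModEq.cancel_left_div_gcd (by norm_num : 0 < 4) h2
  norm_num at h3
  exact h3

lemma quad_solve_linear {M : ℕ} [NeZero M] (a c : ZMod M)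
    (hu : ∀ z : ZMod M, IsUnit (a * z + (2 - a))) :
    ∃ x y : ZMod M, (a * x ^ 2 + (2 - a) * x) + (a * y ^ 2 + (2 - a) * y) = c := by
  have hinj : Function.Injective (fun z : ZMod M => a * z ^ 2 + (2 - a) * z) := by
    intro x y hxy
    simp only at hxy
    have hfac : (x - y) * (a * (x + y) + (2 - a)) = 0 := by
      have h0 : a * x ^ 2 + (2 - a) * x - (a * y ^ 2 + (2 - a) * y) = 0 := by rw [hxy]; ring
      calc (x - y) * (a * (x + y) + (2 - a))
          = a * x ^ 2 + (2 - a) * x - (a * y ^ 2 + (2 - a) * y) := by ring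
        _ = 0 := h0
    exact sub_eq_zero.mp (((hu (x + y)).mul_left_eq_zero).mp hfac)
  obtain ⟨x, hx⟩ := (Finite.injective_iff_surjective).mp hinj c
  refine ⟨x, 0, ?_⟩
  simp only at hx
  rw [← hx]; ring

lemma quad_solve_sq {M : ℕ} [NeZero M] (a c : ZMod M) (ha : IsUnit a) (h2 : IsUnit (2 : ZMod M))
    (hsq : ∀ t : ZMod M, ∃ u v : ZMod M, u ^ 2 + v ^ 2 = t) :
    ∃ x y : ZMod M, (a * x ^ 2 + (2 - a) * x) + (a * y ^ 2 + (2 - a) * y) = c := by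
  obtain ⟨U, V, hUV⟩ := hsq (4 * a * c + 2 * (2 - a) ^ 2)
  obtain ⟨w, hw⟩ := (h2.mul ha).exists_left_inv
  have hx2a : ∀ z : ZMod M, 2 * a * (w * z) = z := by
    intro z
    calc 2 * a * (w * z) = w * (2 * a) * z := by ring
    _ = z := by rw [hw, one_mul]
  refine ⟨w * (U - (2 - a)), w * (V - (2 - a)), ?_⟩
  have hU : 2 * a * (w * (U - (2 - a))) + (2 - a) = U := by rw [hx2a]; ring
  have hV : 2 * a * (w * (V - (2 - a))) + (2 - a) = V := by rw [hx2a]; ring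
  have h4a : IsUnit (2 * (2 * a)) := h2.mul (h2.mul ha)
  apply h4a.mul_left_cancel
  set x := w * (U - (2 - a)) with hxd
  set y := w * (V - (2 - a)) with hyd
  calc 2 * (2 * a) * ((a * x ^ 2 + (2 - a) * x) + (a * y ^ 2 + (2 - a) * y))
      = (2 * a * x + (2 - a)) ^ 2 + (2 * a * y + (2 - a)) ^ 2 - 2 * (2 - a) ^ 2 := by ring
    _ = U ^ 2 + V ^ 2 - 2 * (2 - a) ^ 2 := by rw [hU, hV]
    _ = (4 * a * c + 2 * (2 - a) ^ 2) - 2 * (2 - a) ^ 2 := by rw [hUV]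
    _ = 2 * (2 * a) * c := by ring

lemma sqlift (k : ℕ) (w : ℤ) (hw : w % 5 = 1 ∨ w % 5 = 4) :
    ∃ U : ℤ, (5:ℤ) ^ k ∣ w - U ^ 2 ∧ ¬ (5:ℤ) ∣ U := by
  induction k with
  | zero =>
    rcases hw with h | h
    · exact ⟨1, by simp, by omega⟩
    · exact ⟨2, by simp, by omega⟩
  | succ k IH =>
    rcases Nat.eq_zero_or_pos k with rfl | hk
    · rcases hw with h | h
      · refine ⟨1, ?_, by omega⟩
        simp only [pow_one, one_pow]
        omega
      · refine ⟨2, ?_, by omega⟩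
        have h4 : (2:ℤ) ^ 2 = 4 := by norm_num
        simp only [pow_one, h4]
        omega
    · obtain ⟨U, hU, hU5⟩ := IH
      obtain ⟨e, he⟩ := hU
      have h2U : ((2 * U : ℤ) : ZMod 5) ≠ 0 := by
        rw [Ne, ZMod.intCast_zmod_eq_zero_iff_dvd]
        omega
      obtain ⟨t, ht⟩ : ∃ t : ℤ, (5:ℤ) ∣ e - 2 * U * t := by
        haveI : Fact (Nat.Prime 5) := ⟨by norm_num⟩
        have hunit : IsUnit ((2 * U : ℤ) : ZMod 5) := isUnit_iff_ne_zero.mpr h2U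
        obtain ⟨w', hw'⟩ := hunit.exists_left_inv
        refine ⟨((w' * ((e : ℤ) : ZMod 5)).val : ℕ), ?_⟩
        have hz : ((e - 2 * U * ((w' * ((e : ℤ) : ZMod 5)).val : ℕ) : ℤ) : ZMod 5) = 0 := by
          push_cast
          rw [ZMod.natCast_val, ZMod.cast_id]
          calc ((e : ℤ) : ZMod 5) - (2 * ((U:ℤ) : ZMod 5)) * (w' * ((e : ℤ) : ZMod 5))
              = ((e : ℤ) : ZMod 5) - (w' * ((2 * U : ℤ) : ZMod 5)) * ((e : ℤ) : ZMod 5) := by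
                push_cast
                ring
            _ = 0 := by rw [hw']; ring
        have hd := (ZMod.intCast_zmod_eq_zero_iff_dvd _ 5).mp hz
        exact_mod_cast hd
      refine ⟨U + t * 5 ^ k, ?_, ?_⟩
      · have hw2 : w = 5 ^ k * e + U ^ 2 := by linarith
        have key : w - (U + t * 5 ^ k) ^ 2
            = 5 ^ k * (e - 2 * U * t) - t ^ 2 * ((5:ℤ) ^ k * 5 ^ k) := by
          rw [hw2]; ring
        rw [key, pow_succ]
        refine dvd_sub (mul_dvd_mul_left _ ht) ?_
        refine Dvd.dvd.mul_left ?_ (t ^ 2)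
        exact mul_dvd_mul_left _ (dvd_pow_self 5 hk.ne')
      · intro hdvd
        apply hU5
        have h5k : (5:ℤ) ∣ t * 5 ^ k := Dvd.dvd.mul_left (dvd_pow_self 5 hk.ne') t
        omega

lemma sq5 (f : ℕ) : ∀ c : ℤ, ∃ U V : ℤ, (5:ℤ) ^ f ∣ c - (U ^ 2 + V ^ 2) := by
  induction f with
  | zero => exact fun c => ⟨0, 0, by simp⟩
  | succ f IH =>
    intro c
    by_cases hc : (5:ℤ) ∣ c
    · obtain ⟨d, rfl⟩ := hc
      obtain ⟨W, T, hWT⟩ := IH d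
      refine ⟨W + 2 * T, 2 * W - T, ?_⟩
      have key : 5 * d - ((W + 2 * T) ^ 2 + (2 * W - T) ^ 2) = (d - (W ^ 2 + T ^ 2)) * 5 := by
        ring
      rw [key, pow_succ]
      exact mul_dvd_mul hWT dvd_rfl
    · obtain ⟨V, hV⟩ : ∃ V : ℤ, ((c - V ^ 2) % 5 = 1 ∨ (c - V ^ 2) % 5 = 4) := by
        have h5 : c % 5 = 1 ∨ c % 5 = 2 ∨ c % 5 = 3 ∨ c % 5 = 4 := by omega
        rcases h5 with h | h | h | h
        · exact ⟨0, by norm_num; omega⟩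
        · exact ⟨1, by norm_num; omega⟩
        · exact ⟨2, by norm_num; omega⟩
        · exact ⟨0, by norm_num; omega⟩
      obtain ⟨U, hU, -⟩ := sqlift (f + 1) (c - V ^ 2) hV
      refine ⟨U, V, ?_⟩
      have : c - (U ^ 2 + V ^ 2) = (c - V ^ 2) - U ^ 2 := by ring
      rw [this]
      exact hU

lemma sq_add_sq_zmod_five_pow (f : ℕ) (t : ZMod (5 ^ f)) :
    ∃ u v : ZMod (5 ^ f), u ^ 2 + v ^ 2 = t := by
  haveI : NeZero (5 ^ f) := ⟨pow_ne_zero f (by norm_num)⟩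
  obtain ⟨U, V, h⟩ := sq5 f (t.val : ℤ)
  refine ⟨((U : ℤ) : ZMod (5 ^ f)), ((V : ℤ) : ZMod (5 ^ f)), ?_⟩
  have hcast : (((t.val : ℤ) - (U ^ 2 + V ^ 2) : ℤ) : ZMod (5 ^ f)) = 0 := by
    rw [ZMod.intCast_zmod_eq_zero_iff_dvd]
    have h5 : ((5 ^ f : ℕ) : ℤ) = (5 : ℤ) ^ f := by push_cast; ring
    rw [h5]
    exact h
  have h2 : (((t.val : ℤ)) : ZMod (5 ^ f)) = (((U ^ 2 + V ^ 2 : ℤ)) : ZMod (5 ^ f)) := by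
    rw [Int.cast_sub] at hcast
    exact sub_eq_zero.mp hcast
  push_cast at h2
  rw [ZMod.natCast_val, ZMod.cast_id] at h2
  rw [← h2]

/-- units of `ZMod (5^f)` detected mod 5 -/
lemma unit_of_zmod_five_pow {f : ℕ} (hf : 1 ≤ f) (u : ZMod (5 ^ f))
    (h : ¬ (5 ∣ u.val)) : IsUnit u := by
  haveI : NeZero (5 ^ f) := ⟨pow_ne_zero f (by norm_num)⟩
  have hu : u = ((u.val : ℕ) : ZMod (5 ^ f)) := by
    rw [ZMod.natCast_val, ZMod.cast_id]
  rw [hu]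
  rw [ZMod.isUnit_iff_coprime]
  refine Nat.Coprime.pow_right f ?_
  exact Nat.coprime_comm.mp ((Nat.Prime.coprime_iff_not_dvd (by norm_num)).mpr h)

lemma comp_odd (s n M : ℕ) [NeZero M] (hModd : ¬ 2 ∣ M)
    (h : ∃ x y : ZMod M,
      (((s - 2 : ℕ) : ZMod M) * x ^ 2 + (2 - ((s - 2 : ℕ) : ZMod M)) * x)
        + (((s - 2 : ℕ) : ZMod M) * y ^ 2 + (2 - ((s - 2 : ℕ) : ZMod M)) * y)
        = ((2 * n : ℕ) : ZMod M)) :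
    ∃ α β : ℕ, Qp s α + Qp s β ≡ n [MOD M] := by
  obtain ⟨x, y, hxy⟩ := h
  refine ⟨x.val, y.val, ?_⟩
  have h2 : 2 * (Qp s x.val + Qp s y.val) ≡ 2 * n [MOD M] := by
    rw [← ZMod.natCast_eq_natCast_iff]
    have e1 : ((2 * (Qp s x.val + Qp s y.val) : ℕ) : ZMod M)
        = ((2 * Qp s x.val : ℕ) : ZMod M) + ((2 * Qp s y.val : ℕ) : ZMod M) := by
      push_cast; ring
    rw [e1, cast_two_Qp, cast_two_Qp]
    rw [ZMod.natCast_val, ZMod.natCast_val, ZMod.cast_id, ZMod.cast_id]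
    exact hxy
  exact Nat.ModEq.cancel_left_of_coprime
    (Nat.coprime_comm.mp (Nat.Prime.coprime_iff_not_dvd Nat.prime_two |>.mpr hModd)) h2

lemma comp_odd_prime (s n M : ℕ) (hM : M.Prime) (hModd : M ≠ 2) :
    ∃ α β : ℕ, Qp s α + Qp s β ≡ n [MOD M] := by
  haveI := Fact.mk hM
  have hMdvd : ¬ 2 ∣ M := by
    intro h
    rcases (Nat.Prime.eq_one_or_self_of_dvd hM 2 h) with h1 | h1 <;> omega
  have h2ne : (2 : ZMod M) ≠ 0 := by
    have hnd : ¬ M ∣ 2 := by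
      intro h
      have h1 := Nat.le_of_dvd (by norm_num) h
      have h2 := hM.two_le
      omega
    have : ((2 : ℕ) : ZMod M) ≠ 0 := by
      rw [Ne, ZMod.natCast_eq_zero_iff]
      exact hnd
    exact_mod_cast this
  apply comp_odd s n M hMdvd
  set a := ((s - 2 : ℕ) : ZMod M) with hadef
  by_cases ha : a = 0
  · apply quad_solve_linear
    intro z
    rw [ha]
    simpa using isUnit_iff_ne_zero.mpr h2ne
  · exact quad_solve_sq a _ (isUnit_iff_ne_zero.mpr ha) (isUnit_iff_ne_zero.mpr h2ne)
      (ZMod.sq_add_sq M)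

lemma comp_five (s n f : ℕ) : ∃ α β : ℕ, Qp s α + Qp s β ≡ n [MOD 5 ^ f] := by
  rcases Nat.eq_zero_or_pos f with rfl | hf
  · exact ⟨0, 0, by simpa using Nat.modEq_one⟩
  haveI : NeZero (5 ^ f) := ⟨pow_ne_zero f (by norm_num)⟩
  have hModd : ¬ 2 ∣ 5 ^ f := by
    intro h
    have := Nat.Prime.dvd_of_dvd_pow Nat.prime_two h
    omega
  apply comp_odd s n _ hModd
  set a := ((s - 2 : ℕ) : ZMod (5 ^ f)) with hadef
  have h2unit : IsUnit (2 : ZMod (5 ^ f)) := by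
    have : ((2:ℕ) : ZMod (5 ^ f)) = (2 : ZMod (5 ^ f)) := by push_cast; ring
    rw [← this, ZMod.isUnit_iff_coprime]
    refine Nat.Coprime.pow_right f (by norm_num)
  by_cases h5 : 5 ∣ (s - 2)
  · apply quad_solve_linear
    intro z
    apply unit_of_zmod_five_pow hf
    intro hdvd
    have h5f : (5:ℕ) ∣ 5 ^ f := dvd_pow_self 5 (by omega)
    set φ := ZMod.castHom h5f (ZMod 5) with hφ
    have hval : ((a * z + (2 - a)).val : ZMod 5) = φ (a * z + (2 - a)) := by
      rw [ZMod.castHom_apply, ZMod.natCast_val]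
    have hz0 : ((a * z + (2 - a)).val : ZMod 5) = 0 := by
      rw [ZMod.natCast_eq_zero_iff]
      exact hdvd
    have hφa : φ a = 0 := by
      rw [hadef, map_natCast, ZMod.natCast_eq_zero_iff]
      exact h5
    have hφu : φ (a * z + (2 - a)) = 2 := by
      rw [map_add, map_mul, map_sub, hφa, map_ofNat]
      ring
    rw [hval, hφu] at hz0
    exact absurd hz0 (by decide)
  · apply quad_solve_sq a _ ?_ h2unit (sq_add_sq_zmod_five_pow f)
    rw [hadef, ZMod.isUnit_iff_coprime]
    refine Nat.Coprime.pow_right f ?_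
    exact Nat.coprime_comm.mp ((Nat.Prime.coprime_iff_not_dvd (by norm_num)).mpr h5)

lemma coprime_list_prod {M : ℕ} {l : List ℕ} (h : ∀ x ∈ l, Nat.Coprime M x) :
    Nat.Coprime M l.prod := by
  induction l with
  | nil => simp
  | cons a l IH =>
    rw [List.prod_cons]
    exact Nat.Coprime.mul_right (h a (by simp)) (IH fun x hx => h x (by simp [hx]))

lemma crt_list : ∀ (l : List (ℕ × ℕ)), (l.map Prod.fst).Pairwise Nat.Coprime →
    ∃ A : ℕ, ∀ p ∈ l, A ≡ p.2 [MOD p.1] := by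
  intro l
  induction l with
  | nil => exact fun _ => ⟨0, by simp⟩
  | cons Mr l IH =>
    intro hp
    rw [List.map_cons, List.pairwise_cons] at hp
    obtain ⟨A', hA'⟩ := IH hp.2
    have hcop : Nat.Coprime Mr.1 (l.map Prod.fst).prod :=
      coprime_list_prod (fun x hx => hp.1 x hx)
    obtain ⟨k, hk1, hk2⟩ := Nat.chineseRemainder hcop Mr.2 A'
    refine ⟨k, fun p hp' => ?_⟩
    rcases List.mem_cons.mp hp' with rfl | hmem
    · exact hk1
    · have hdvd : p.1 ∣ (l.map Prod.fst).prod := List.dvd_prod (List.mem_map_of_mem hmem)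
      exact (Nat.ModEq.of_dvd hdvd hk2).trans (hA' p hmem)

lemma one_add_sum_le_prod (S : Finset ℕ) (f : ℕ → ℝ) (hf : ∀ q ∈ S, 0 ≤ f q) :
    1 + ∑ q ∈ S, f q ≤ ∏ q ∈ S, (1 + f q) := by
  classical
  induction S using Finset.induction_on with
  | empty => simp
  | @insert a s ha IH =>
    rw [Finset.sum_insert ha, Finset.prod_insert ha]
    have h0 : 0 ≤ f a := hf a (Finset.mem_insert_self a s)
    have h1 : ∀ q ∈ s, 0 ≤ f q := fun q hq => hf q (Finset.mem_insert_of_mem hq)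
    have h2 := IH h1
    have h3 : (0:ℝ) ≤ ∑ q ∈ s, f q := Finset.sum_nonneg h1
    nlinarith

lemma scaffold_nat (C : ℕ) : ∃ S : Finset ℕ, (∀ q ∈ S, Nat.Prime q ∧ 5 < q) ∧
    C * ∏ q ∈ S, q ≤ ∏ q ∈ S, (q + 1) := by
  classical
  set g : ℕ → ℝ := Set.indicator {p | Nat.Prime p} (fun n => 1 / (n : ℝ)) with hg
  have hnonneg : ∀ n, 0 ≤ g n := by
    intro n
    rw [hg]
    apply Set.indicator_nonneg
    intro a _
    positivity
  have hdiv : Filter.Tendsto (fun n => ∑ i ∈ Finset.range n, g i) Filter.atTop Filter.atTop :=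
    (not_summable_iff_tendsto_nat_atTop_of_nonneg hnonneg).mp not_summable_one_div_on_primes
  obtain ⟨N, hN⟩ := (hdiv.eventually_ge_atTop ((C : ℝ) + 2)).exists
  refine ⟨(Finset.range N).filter (fun q => Nat.Prime q ∧ 5 < q), fun q hq => (Finset.mem_filter.mp hq).2, ?_⟩
  set S := (Finset.range N).filter (fun q => Nat.Prime q ∧ 5 < q) with hS
  have hSsum : (C : ℝ) ≤ ∑ q ∈ S, 1 / (q : ℝ) := by
    have h1 : ∑ i ∈ Finset.range N, g i
        = ∑ q ∈ (Finset.range N).filter (fun q => Nat.Prime q), 1 / (q : ℝ) := by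
      rw [hg]
      rw [Finset.sum_indicator_eq_sum_filter]
      simp only [Set.mem_setOf_eq]
    have h2 : ∑ q ∈ (Finset.range N).filter (fun q => Nat.Prime q), 1 / (q : ℝ)
        = (∑ q ∈ ((Finset.range N).filter (fun q => Nat.Prime q)).filter (fun q => 5 < q), 1 / (q:ℝ))
          + ∑ q ∈ ((Finset.range N).filter (fun q => Nat.Prime q)).filter (fun q => ¬ 5 < q), 1 / (q:ℝ) :=
      (Finset.sum_filter_add_sum_filter_not _ _ _).symm
    have h3 : ((Finset.range N).filter (fun q => Nat.Prime q)).filter (fun q => 5 < q) = S := by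
      rw [hS, Finset.filter_filter]
    have h4 : ∑ q ∈ ((Finset.range N).filter (fun q => Nat.Prime q)).filter (fun q => ¬ 5 < q), 1 / (q:ℝ) ≤ 2 := by
      have hsub : ((Finset.range N).filter (fun q => Nat.Prime q)).filter (fun q => ¬ 5 < q)
          ⊆ ({2, 3, 5} : Finset ℕ) := by
        intro q hq
        have h5 := Finset.mem_filter.mp hq
        have h6 := Finset.mem_filter.mp h5.1
        have hp := h6.2
        have hle : q ≤ 5 := by omega
        have h2le := hp.two_le
        interval_cases q
        · decide
        · decide
        · exact absurd hp (by decide)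
        · decide
      calc ∑ q ∈ ((Finset.range N).filter (fun q => Nat.Prime q)).filter (fun q => ¬ 5 < q), 1 / (q:ℝ)
          ≤ ∑ q ∈ ({2,3,5} : Finset ℕ), 1 / (q:ℝ) := by
            apply Finset.sum_le_sum_of_subset_of_nonneg hsub
            intro i _ _
            positivity
        _ ≤ 2 := by norm_num
    have h5 := hN
    rw [h1, h2, h3] at h5
    linarith
  have hq2 : ∀ q ∈ S, (2:ℕ) ≤ q := by
    intro q hq
    exact ((Finset.mem_filter.mp hq).2.1).two_le
  have hprodpos : (0:ℝ) < ∏ q ∈ S, (q : ℝ) := by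
    apply Finset.prod_pos
    intro q hq
    have := hq2 q hq
    positivity
  have hfactor : ∏ q ∈ S, ((q:ℝ) + 1) = (∏ q ∈ S, (q:ℝ)) * ∏ q ∈ S, (1 + 1/(q:ℝ)) := by
    rw [← Finset.prod_mul_distrib]
    apply Finset.prod_congr rfl
    intro q hq
    have hqpos : (0:ℝ) < (q:ℝ) := by
      have := hq2 q hq
      positivity
    field_simp
  have hprod1 : (C:ℝ) ≤ ∏ q ∈ S, (1 + 1/(q:ℝ)) := by
    have := one_add_sum_le_prod S (fun q => 1/(q:ℝ)) (fun q hq => by positivity)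
    have h0 : (0:ℝ) ≤ 1 := by norm_num
    calc (C:ℝ) ≤ 1 + ∑ q ∈ S, 1/(q:ℝ) := by linarith
    _ ≤ _ := this
  rw [← Nat.cast_le (α := ℝ)]
  push_cast
  rw [hfactor]
  calc (C:ℝ) * ∏ q ∈ S, (q:ℝ) = (∏ q ∈ S, (q:ℝ)) * (C:ℝ) := by ring
  _ ≤ (∏ q ∈ S, (q:ℝ)) * ∏ q ∈ S, (1 + 1/(q:ℝ)) := by
      apply mul_le_mul_of_nonneg_left hprod1 (le_of_lt hprodpos)

lemma Sg_mul {a b : ℕ} (h : Nat.Coprime a b) : Sg (a * b) = Sg a * Sg b := by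
  have happ : ∀ x : ℕ, (ArithmeticFunction.sigma 1) x = Sg x := by
    intro x
    rw [ArithmeticFunction.sigma_apply]
    simp [Sg]
  rw [← happ, ← happ, ← happ, ArithmeticFunction.isMultiplicative_sigma.map_mul_of_coprime h]

lemma Sg_prime {q : ℕ} (hq : Nat.Prime q) : Sg q = q + 1 := by
  unfold Sg
  rw [hq.divisors, Finset.sum_pair (by have := hq.two_le; omega : (1:ℕ) ≠ q)]
  omega

lemma Sg_prod_primes : ∀ (S : Finset ℕ), (∀ q ∈ S, Nat.Prime q) → Sg (∏ q ∈ S, q) = ∏ q ∈ S, (q + 1) := by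
  classical
  intro S
  induction S using Finset.induction_on with
  | empty => intro _; simp [Sg]
  | @insert a s ha IH =>
    intro hp
    rw [Finset.prod_insert ha, Finset.prod_insert ha]
    have hcop : Nat.Coprime a (∏ q ∈ s, q) := by
      apply Nat.Coprime.prod_right
      intro i hi
      refine (Nat.coprime_primes (hp a (Finset.mem_insert_self a s))
        (hp i (Finset.mem_insert_of_mem hi))).mpr ?_
      intro hai
      exact ha (hai ▸ hi)
    rw [Sg_mul hcop, Sg_prime (hp a (Finset.mem_insert_self a s)),
      IH (fun q hq => hp q (Finset.mem_insert_of_mem hq))]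

lemma practical_two : Practical 2 := by
  have := practical_mul practical_one (t := 2) (by norm_num) (by decide)
  simpa using this

lemma practical_six : Practical 6 := by
  have := practical_mul practical_two (t := 3) (by norm_num) (by decide)
  simpa using this

lemma practical_six_five (f : ℕ) : Practical (6 * 5 ^ f) := by
  induction f with
  | zero => simpa using practical_six
  | succ f IH =>
    have heq : 6 * 5 ^ (f + 1) = (6 * 5 ^ f) * 5 := by ring
    rw [heq]
    apply practical_mul IH (by norm_num)
    have h1 := Sg_ge_self (show 0 < 6 * 5 ^ f by positivity)
    have h2 : 1 ≤ 5 ^ f := Nat.one_le_pow _ _ (by norm_num)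
    omega

lemma practical_base (f : ℕ) : ∀ S : Finset ℕ, (∀ q ∈ S, Nat.Prime q) →
    (∀ q ∈ S, q ≤ 6 * 5 ^ f) → Practical (6 * 5 ^ f * ∏ q ∈ S, q) := by
  classical
  intro S
  induction S using Finset.induction_on with
  | empty => intro _ _; simpa using practical_six_five f
  | @insert a s ha IH =>
    intro hp hb
    rw [Finset.prod_insert ha]
    have heq : 6 * 5 ^ f * (a * ∏ q ∈ s, q) = (6 * 5 ^ f * ∏ q ∈ s, q) * a := by ring
    rw [heq]
    have hIH := IH (fun q hq => hp q (Finset.mem_insert_of_mem hq))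
      (fun q hq => hb q (Finset.mem_insert_of_mem hq))
    apply practical_mul hIH (hp a (Finset.mem_insert_self a s)).pos
    have h1 := Sg_ge_self hIH.1
    have h2 : 1 ≤ ∏ q ∈ s, q := by
      apply Finset.one_le_prod'
      intro q hq
      exact (hp q (Finset.mem_insert_of_mem hq)).pos
    have h3 := hb a (Finset.mem_insert_self a s)
    nlinarith

lemma exists_f (P n C : ℕ) (hP : 0 < P) (hC : 0 < C) (hn : C * (6 * 5 * P) ^ 2 < n) :
    ∃ f : ℕ, 1 ≤ f ∧ n ≤ C * (6 * 5 ^ f * P) ^ 2 ∧ C * (6 * 5 ^ f * P) ^ 2 < 25 * n := by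
  have hex : ∃ f : ℕ, n ≤ C * (6 * 5 ^ f * P) ^ 2 := by
    refine ⟨n, ?_⟩
    have h5 : n < 5 ^ n := Nat.lt_pow_self (by norm_num : 1 < 5)
    have h1 : 5 ^ n ≤ 6 * 5 ^ n * P := by nlinarith
    have h2 : 6 * 5 ^ n * P ≤ (6 * 5 ^ n * P) ^ 2 := Nat.le_self_pow (by norm_num) _
    nlinarith
  classical
  set f := Nat.find hex with hfdef
  have hfspec : n ≤ C * (6 * 5 ^ f * P) ^ 2 := Nat.find_spec hex
  have hf1 : 1 ≤ f := by
    by_contra h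
    have hf0 : f = 0 := by omega
    rw [hf0] at hfspec
    simp at hfspec
    nlinarith
  have hmin : ¬ n ≤ C * (6 * 5 ^ (f - 1) * P) ^ 2 := Nat.find_min hex (by omega)
  push_neg at hmin
  refine ⟨f, hf1, hfspec, ?_⟩
  have hstep : (6 * 5 ^ f * P) ^ 2 = 25 * (6 * 5 ^ (f - 1) * P) ^ 2 := by
    have h5 : 5 ^ f = 5 * 5 ^ (f - 1) := by
      conv_lhs => rw [show f = (f - 1) + 1 by omega]
      ring
    rw [h5]; ring
  rw [hstep]
  nlinarith

lemma coprime_lt_prime {q x : ℕ} (hq : Nat.Prime q) (h0 : 0 < x) (hlt : x < q) :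
    Nat.Coprime x q := by
  rw [Nat.coprime_comm, hq.coprime_iff_not_dvd]
  intro hd
  have := Nat.le_of_dvd h0 hd
  omega

lemma coprime_six_five_pow {q f : ℕ} (hq : Nat.Prime q) (h5 : 5 < q) :
    Nat.Coprime (6 * 5 ^ f) q := by
  rw [Nat.coprime_comm, hq.coprime_iff_not_dvd]
  intro hd
  rcases (Nat.Prime.dvd_mul hq).mp hd with h | h
  · have h6 := Nat.le_of_dvd (by norm_num) h
    interval_cases q
    exact absurd hq (by decide)
  · have h51 := hq.dvd_of_dvd_pow h
    have := Nat.le_of_dvd (by norm_num) h51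
    omega

lemma not_two_dvd_five_pow (f : ℕ) : ¬ 2 ∣ 5 ^ f := by
  intro h
  have := Nat.Prime.dvd_of_dvd_pow Nat.prime_two h
  omega

lemma Qp_le {s x y : ℕ} (h : x ≤ y) : Qp s x ≤ (s - 2) * (y * y) + y := by
  unfold Qp
  have h1 : x * (x - 1) / 2 ≤ y * y := by
    apply Nat.div_le_of_le_mul
    calc x * (x - 1) ≤ y * y := Nat.mul_le_mul h (le_trans (Nat.sub_le x 1) h)
    _ ≤ 2 * (y * y) := by omega
  exact Nat.add_le_add (Nat.mul_le_mul_left _ h1) h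

end Stmt12

set_option maxHeartbeats 2000000 in
open Stmt12 in
theorem stmt_12 (s : ℕ) (hs : 3 < s) :
    ∃ N : ℕ, ∀ n : ℕ, N < n →
      ∃ p x y : ℕ, Practical p ∧ n = p + polygonal s x + polygonal s y := by
  classical
  have hs4 : 4 ≤ s := hs
  obtain ⟨S, hSpq, hSsum⟩ := scaffold_nat (200 * s)
  set C := 200 * s with hCdef
  have hCpos : 0 < C := by positivity
  set P := ∏ q ∈ S, q with hPdef
  have hPpos : 0 < P := Finset.prod_pos (fun q hq => (hSpq q hq).1.pos)
  refine ⟨C * (6 * 5 * P) ^ 2 + C * (36 * P * P) ^ 2, ?_⟩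
  intro n hn
  obtain ⟨f, hf1, hfge, hflt⟩ := exists_f P n C hPpos hCpos (by omega)
  set m := 6 * 5 ^ f * P with hmdef
  have hmpos : 0 < m := by positivity
  -- scaffold primes are at most 6 * 5 ^ f
  have hq_le : ∀ q ∈ S, q ≤ 6 * 5 ^ f := by
    intro q hq
    have hqP : q ≤ P := Nat.le_of_dvd hPpos (Finset.dvd_prod_of_mem _ hq)
    have h1 : C * (36 * P * P) ^ 2 < C * m ^ 2 := by
      have hle : C * (36 * P * P) ^ 2 < n := by omega
      omega
    have h2 : (36 * P * P) ^ 2 < m ^ 2 := lt_of_mul_lt_mul_left h1 (Nat.zero_le C)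
    have h3 : 36 * P * P < m := by
      by_contra hcon
      push_neg at hcon
      have := Nat.pow_le_pow_left hcon 2
      omega
    have h4 : 36 * P < 6 * 5 ^ f := by
      have h5 : (36 * P) * P < (6 * 5 ^ f) * P := by
        calc (36 * P) * P = 36 * P * P := by ring
        _ < m := h3
        _ = (6 * 5 ^ f) * P := by rw [hmdef]
      exact Nat.lt_of_mul_lt_mul_right h5
    omega
  have hprac : Practical m := by
    rw [hmdef, hPdef]
    exact practical_base f S (fun q hq => (hSpq q hq).1) hq_le
  have hcop : Nat.Coprime (6 * 5 ^ f) P := by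
    apply Nat.Coprime.prod_right
    intro q hq
    exact coprime_six_five_pow (hSpq q hq).1 (hSpq q hq).2
  have hSg : C * m ≤ Sg m := by
    have hSgP : C * P ≤ Sg P := by
      rw [hPdef, Sg_prod_primes S (fun q hq => (hSpq q hq).1)]
      exact hSsum
    calc C * m = (6 * 5 ^ f) * (C * P) := by rw [hmdef]; ring
    _ ≤ (6 * 5 ^ f) * Sg P := Nat.mul_le_mul_left _ hSgP
    _ ≤ Sg (6 * 5 ^ f) * Sg P := Nat.mul_le_mul_right _ (Sg_ge_self (by positivity))
    _ = Sg ((6 * 5 ^ f) * P) := (Sg_mul hcop).symm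
    _ = Sg m := by rw [hmdef]
  -- component solutions
  obtain ⟨α3, β3, h3c⟩ := comp_odd_prime s n 3 (by norm_num) (by norm_num)
  obtain ⟨α5, β5, h5c⟩ := comp_five s n f
  have hcompq : ∀ q : ℕ, ∃ ab : ℕ × ℕ,
      (Nat.Prime q ∧ 5 < q) → Qp s ab.1 + Qp s ab.2 ≡ n [MOD q] := by
    intro q
    by_cases hq : Nat.Prime q ∧ 5 < q
    · obtain ⟨α, β, h⟩ := comp_odd_prime s n q hq.1 (by omega)
      exact ⟨(α, β), fun _ => h⟩
    · exact ⟨(0, 0), fun h => absurd h hq⟩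
  choose gab hgab using hcompq
  -- pairwise coprime moduli
  have hmods : ((4:ℕ) :: 3 :: 5 ^ f :: S.toList).Pairwise Nat.Coprime := by
    refine List.Pairwise.cons ?_ (List.Pairwise.cons ?_ (List.Pairwise.cons ?_ ?_))
    · intro b hb
      rcases List.mem_cons.mp hb with rfl | hb
      · decide
      rcases List.mem_cons.mp hb with rfl | hb
      · exact Nat.Coprime.pow_right f (by decide)
      · have h := hSpq b (Finset.mem_toList.mp hb)
        exact coprime_lt_prime h.1 (by norm_num) (by omega)
    · intro b hb
      rcases List.mem_cons.mp hb with rfl | hb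
      · exact Nat.Coprime.pow_right f (by decide)
      · have h := hSpq b (Finset.mem_toList.mp hb)
        exact coprime_lt_prime h.1 (by norm_num) (by omega)
    · intro b hb
      have h := hSpq b (Finset.mem_toList.mp hb)
      exact Nat.Coprime.pow_left f (coprime_lt_prime h.1 (by norm_num) (by omega))
    · refine List.Pairwise.imp_of_mem ?_ S.nodup_toList
      intro a b ha hb hne
      exact (Nat.coprime_primes (hSpq a (Finset.mem_toList.mp ha)).1
        (hSpq b (Finset.mem_toList.mp hb)).1).mpr hne
  have hfstmap : ∀ (r1 r2 r3 : ℕ) (h : ℕ → ℕ),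
      (((4:ℕ), r1) :: ((3:ℕ), r2) :: ((5 ^ f : ℕ), r3)
        :: S.toList.map (fun q => (q, h q)) |>.map Prod.fst) = (4:ℕ) :: 3 :: 5 ^ f :: S.toList := by
    intro r1 r2 r3 h
    simp only [List.map_cons, List.map_map]
    generalize S.toList = l
    induction l with
    | nil => rfl
    | cons a l IH => simp_all
  -- CRT for A and B
  obtain ⟨A0, hA0⟩ := crt_list
    (((4:ℕ), n % 2) :: ((3:ℕ), α3) :: ((5 ^ f : ℕ), α5)
      :: S.toList.map (fun q => (q, (fun q => (gab q).1) q)))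
    (by rw [hfstmap _ _ _ _]; exact hmods)
  obtain ⟨B0, hB0⟩ := crt_list
    (((4:ℕ), 0) :: ((3:ℕ), β3) :: ((5 ^ f : ℕ), β5)
      :: S.toList.map (fun q => (q, (fun q => (gab q).2) q)))
    (by rw [hfstmap _ _ _ _]; exact hmods)
  set A := A0 % (2 * m) with hAdef
  set B := B0 % (2 * m) with hBdef
  have hA2m : A < 2 * m := Nat.mod_lt _ (by omega)
  have hB2m : B < 2 * m := Nat.mod_lt _ (by omega)
  -- congruence transfer through the mod-(2m) reduction
  have hdvd4 : (4:ℕ) ∣ 2 * m := ⟨3 * 5 ^ f * P, by rw [hmdef]; ring⟩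
  have hdvd3 : (3:ℕ) ∣ 2 * m := ⟨4 * 5 ^ f * P, by rw [hmdef]; ring⟩
  have hdvd5 : (5:ℕ) ^ f ∣ 2 * m := ⟨12 * P, by rw [hmdef]; ring⟩
  have hdvdq : ∀ q ∈ S, q ∣ 2 * m := by
    intro q hq
    have h1 : q ∣ P := by rw [hPdef]; exact Finset.dvd_prod_of_mem _ hq
    exact h1.trans ⟨12 * 5 ^ f, by rw [hmdef]; ring⟩
  have hAmod : ∀ M r : ℕ, M ∣ 2 * m → A0 ≡ r [MOD M] → A ≡ r [MOD M] := by
    intro M r hMd h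
    exact ((Nat.ModEq.of_dvd hMd (Nat.mod_modEq A0 (2 * m))).trans h)
  have hBmod : ∀ M r : ℕ, M ∣ 2 * m → B0 ≡ r [MOD M] → B ≡ r [MOD M] := by
    intro M r hMd h
    exact ((Nat.ModEq.of_dvd hMd (Nat.mod_modEq B0 (2 * m))).trans h)
  have hA4 : A ≡ n % 2 [MOD 4] :=
    hAmod 4 (n % 2) hdvd4 (hA0 (4, n % 2) (by simp))
  have hB4 : B ≡ 0 [MOD 4] := hBmod 4 0 hdvd4 (hB0 (4, 0) (by simp))
  have hA3 : A ≡ α3 [MOD 3] := hAmod 3 α3 hdvd3 (hA0 (3, α3) (by simp))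
  have hB3 : B ≡ β3 [MOD 3] := hBmod 3 β3 hdvd3 (hB0 (3, β3) (by simp))
  have hA5 : A ≡ α5 [MOD 5 ^ f] := hAmod _ α5 hdvd5 (hA0 (5 ^ f, α5) (by simp))
  have hB5 : B ≡ β5 [MOD 5 ^ f] := hBmod _ β5 hdvd5 (hB0 (5 ^ f, β5) (by simp))
  have hAq : ∀ q ∈ S, A ≡ (gab q).1 [MOD q] := by
    intro q hq
    refine hAmod q _ (hdvdq q hq) (hA0 (q, (gab q).1) ?_)
    apply List.mem_cons_of_mem
    apply List.mem_cons_of_mem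
    apply List.mem_cons_of_mem
    exact List.mem_map_of_mem (Finset.mem_toList.mpr hq)
  have hBq : ∀ q ∈ S, B ≡ (gab q).2 [MOD q] := by
    intro q hq
    refine hBmod q _ (hdvdq q hq) (hB0 (q, (gab q).2) ?_)
    apply List.mem_cons_of_mem
    apply List.mem_cons_of_mem
    apply List.mem_cons_of_mem
    exact List.mem_map_of_mem (Finset.mem_toList.mpr hq)
  -- the value V and its congruences
  set V := Qp s A + Qp s B with hVdef
  have hQ0 : Qp s 0 = 0 := by simp [Qp]
  have hQ1 : Qp s 1 = 1 := by simp [Qp]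
  have hV2 : V ≡ n [MOD 2] := by
    have base2 : Qp s (n % 2) + Qp s 0 ≡ n [MOD 2] := by
      rcases Nat.mod_two_eq_zero_or_one n with h | h <;> rw [h]
      · rw [hQ0]
        show (0 + 0) % 2 = n % 2
        omega
      · rw [hQ1, hQ0]
        show (1 + 0) % 2 = n % 2
        omega
    exact ((Qp_congr_two hA4).add (Qp_congr_two hB4)).trans base2
  have hV3 : V ≡ n [MOD 3] :=
    ((Qp_congr_odd (by decide) hA3).add (Qp_congr_odd (by decide) hB3)).trans h3c
  have hV5 : V ≡ n [MOD 5 ^ f] :=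
    ((Qp_congr_odd (not_two_dvd_five_pow f) hA5).add
      (Qp_congr_odd (not_two_dvd_five_pow f) hB5)).trans h5c
  have hVq : ∀ q ∈ S, V ≡ n [MOD q] := by
    intro q hq
    have hoddq : ¬ 2 ∣ q := by
      intro h
      have := (Nat.prime_dvd_prime_iff_eq Nat.prime_two (hSpq q hq).1).mp h
      have := (hSpq q hq).2
      omega
    exact ((Qp_congr_odd hoddq (hAq q hq)).add (Qp_congr_odd hoddq (hBq q hq))).trans
      (hgab q (hSpq q hq))
  -- size bounds
  have hQA : Qp s A ≤ (s - 2) * (2 * m * (2 * m)) + 2 * m := Qp_le (le_of_lt hA2m)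
  have hQB : Qp s B ≤ (s - 2) * (2 * m * (2 * m)) + 2 * m := Qp_le (le_of_lt hB2m)
  have h8 : 8 * s * (m * m) < n := by
    have hflt' := hflt
    rw [hCdef, pow_two] at hflt'
    nlinarith [hflt']
  have hVm : V + m ≤ n := by
    clear_value V m
    obtain ⟨a, rfl⟩ : ∃ a, s = a + 4 := ⟨s - 4, by omega⟩
    have hs2 : a + 4 - 2 = a + 2 := by omega
    rw [hs2] at hQA hQB
    have hmm : m ≤ m * m := Nat.le_mul_of_pos_left m hmpos
    have e : 2 * ((a + 2) * (2 * m * (2 * m)) + 2 * m) + m ≤ 8 * (a + 4) * (m * m) := by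
      nlinarith [hmm]
    linarith [hQA, hQB, h8, hVdef, e]
  have hVn : V ≤ n := by omega
  -- divisibility
  have hd2 : 2 ∣ n - V := (Nat.modEq_iff_dvd' hVn).mp hV2
  have hd3 : 3 ∣ n - V := (Nat.modEq_iff_dvd' hVn).mp hV3
  have hd5 : 5 ^ f ∣ n - V := (Nat.modEq_iff_dvd' hVn).mp hV5
  have hdP : P ∣ n - V := by
    rw [hPdef]
    exact Finset.prod_primes_dvd _ (fun q hq => (hSpq q hq).1.prime)
      (fun q hq => (Nat.modEq_iff_dvd' hVn).mp (hVq q hq))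
  have hd6 : (6:ℕ) ∣ n - V := Nat.Coprime.mul_dvd_of_dvd_of_dvd (by decide) hd2 hd3
  have hd65 : 6 * 5 ^ f ∣ n - V :=
    Nat.Coprime.mul_dvd_of_dvd_of_dvd (Nat.Coprime.pow_right f (by decide)) hd6 hd5
  have hdm : m ∣ n - V := by
    rw [hmdef]
    exact Nat.Coprime.mul_dvd_of_dvd_of_dvd hcop hd65 hdP
  -- the practical number
  have hKm : m * ((n - V) / m) = n - V := Nat.mul_div_cancel' hdm
  have htpos : 0 < (n - V) / m := Nat.div_pos (by omega) hmpos
  have htle : (n - V) / m ≤ Sg m := by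
    apply Nat.div_le_of_le_mul
    calc n - V ≤ n := by omega
    _ ≤ C * m ^ 2 := hfge
    _ = m * (C * m) := by ring
    _ ≤ m * Sg m := Nat.mul_le_mul_left _ hSg
  have hppr : Practical (n - V) := by
    rw [← hKm]
    exact practical_mul hprac htpos (by omega)
  refine ⟨n - V, A, B, hppr, ?_⟩
  rw [polygonal_eq hs4, polygonal_eq hs4]
  omega
end

section
/- If s ≡ 0 (mod 12) or s ≡ 4 (mod 12) with s > 3, then there are infinitely many natural numbers that cannot be written as a sum of a practical number and an s-gonal number. -/
lemma practical_structure (p : ℕ) (hp : Practical p) (h4 : p % 4 ≠ 0) (h6 : p % 6 ≠ 0) :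
    p = 1 ∨ p = 2 := by
  obtain ⟨hpos, hall⟩ := hp
  by_contra hc
  push_neg at hc
  obtain ⟨h1, h2⟩ := hc
  rcases Nat.even_or_odd p with he | ho
  · have hpe : p % 2 = 0 := Nat.even_iff.mp he
    obtain ⟨S, hS, hsum⟩ := hall 4 (by norm_num) (by omega)
    have hsub : S ⊆ ({1, 2} : Finset ℕ) := by
      intro d hd
      have hdvd := hS d hd
      have hle : d ≤ 4 := by
        have := Finset.single_le_sum (f := fun i : ℕ => i) (fun i _ => Nat.zero_le i) hd
        rw [hsum] at this; exact this
      have hne : d ≠ 0 := by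
        rintro rfl
        have := Nat.eq_zero_of_zero_dvd hdvd
        omega
      obtain ⟨k, hk⟩ := hdvd
      have hd3 : d ≠ 3 := by rintro rfl; omega
      have hd4 : d ≠ 4 := by rintro rfl; omega
      simp only [Finset.mem_insert, Finset.mem_singleton]
      omega
    have hle3 : ∑ d ∈ S, d ≤ ∑ d ∈ ({1, 2} : Finset ℕ), d :=
      Finset.sum_le_sum_of_subset hsub
    simp at hle3
    omega
  · have hpo : p % 2 = 1 := Nat.odd_iff.mp ho
    obtain ⟨S, hS, hsum⟩ := hall 2 (by norm_num) (by omega)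
    have hsub : S ⊆ ({1} : Finset ℕ) := by
      intro d hd
      have hdvd := hS d hd
      have hle : d ≤ 2 := by
        have := Finset.single_le_sum (f := fun i : ℕ => i) (fun i _ => Nat.zero_le i) hd
        rw [hsum] at this; exact this
      have hne : d ≠ 0 := by
        rintro rfl
        have := Nat.eq_zero_of_zero_dvd hdvd
        omega
      obtain ⟨k, hk⟩ := hdvd
      have hd2 : d ≠ 2 := by rintro rfl; omega
      simp only [Finset.mem_singleton]
      omega
    have hle1 : ∑ d ∈ S, d ≤ ∑ d ∈ ({1} : Finset ℕ), d :=
      Finset.sum_le_sum_of_subset hsub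
    simp at hle1
    omega

lemma poly_eq (b m : ℕ) : polygonal (2*b+4) m = b*(m^2 - m) + m^2 := by
  have hm : m ≤ m^2 := Nat.le_self_pow (by norm_num) m
  have h1 : 2*b*m ≤ (2*b+2)*m^2 := by
    calc 2*b*m ≤ 2*b*m^2 := Nat.mul_le_mul_left _ hm
    _ ≤ (2*b+2)*m^2 := Nat.mul_le_mul_right _ (by omega)
  have hnum : (2*b+4-2)*m^2 - (2*b+4-4)*m = 2*(b*(m^2-m)+m^2) := by
    have e2 : 2*b+4-2 = 2*b+2 := by omega
    have e4 : 2*b+4-4 = 2*b := by omega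
    rw [e2, e4]
    zify [hm, h1]
    ring
  unfold polygonal
  rw [hnum]
  exact Nat.mul_div_cancel_left _ (by norm_num)

abbrev Good (x : ZMod 72) : Prop := x.val % 4 ≠ 0 ∧ x.val % 6 ≠ 0 ∧ x.val ≠ 1 ∧ x.val ≠ 2

set_option maxHeartbeats 4000000 in
set_option maxRecDepth 100000 in
lemma key4 : ∀ g u : ZMod 72, Good (71 - (6*g*(u^2-u)+u^2)) := by decide

set_option maxHeartbeats 4000000 in
set_option maxRecDepth 100000 in
lemma key0a : ∀ g u : ZMod 72, Good (23 - ((12*g+4)*(u^2-u)+u^2)) := by decide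

set_option maxHeartbeats 4000000 in
set_option maxRecDepth 100000 in
lemma key0b : ∀ g u : ZMod 72, Good (14 - ((12*g+10)*(u^2-u)+u^2)) := by decide

lemma aux (b r : ℕ)
    (hkey : ∀ u : ZMod 72,
      Good ((r : ZMod 72) - ((b : ZMod 72) * (u^2 - u) + u^2))) :
    {n : ℕ | ¬ ∃ p m : ℕ, Practical p ∧ n = p + polygonal (2*b+4) m}.Infinite := by
  apply Set.infinite_of_injective_forall_mem (f := fun k : ℕ => 72*k + r)
  · intro a b h
    simp only at h
    omega
  · intro k
    simp only [Set.mem_setOf_eq]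
    rintro ⟨p, m, hprac, heq⟩
    have hm : m ≤ m^2 := Nat.le_self_pow (by norm_num) m
    have hpoly := poly_eq b m
    have hz : ((72*k + r : ℕ) : ZMod 72)
        = (p : ZMod 72) + ((b : ZMod 72) * ((m : ZMod 72)^2 - (m : ZMod 72)) + (m : ZMod 72)^2) := by
      rw [heq, hpoly]
      push_cast [Nat.cast_sub hm]
      ring
    have hp72 : (p : ZMod 72)
        = (r : ZMod 72) - ((b : ZMod 72) * ((m : ZMod 72)^2 - (m : ZMod 72)) + (m : ZMod 72)^2) := by
      push_cast at hz
      rw [show (72 : ZMod 72) = 0 by decide] at hz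
      linear_combination -hz
    have hval : p % 72
        = ((r : ZMod 72) - ((b : ZMod 72) * ((m : ZMod 72)^2 - (m : ZMod 72)) + (m : ZMod 72)^2)).val := by
      rw [← hp72, ZMod.val_natCast]
    obtain ⟨h1, h2, h3, h4⟩ := hkey (m : ZMod 72)
    rcases practical_structure p hprac (by omega) (by omega) with rfl | rfl <;> omega

theorem stmt_13 (s : ℕ) (hs : 3 < s) (h : s % 12 = 0 ∨ s % 12 = 4) :
    {n : ℕ | ¬ ∃ p m : ℕ, Practical p ∧ n = p + polygonal s m}.Infinite := by
  rcases h with h0 | h4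
  · have h24 : s % 24 = 0 ∨ s % 24 = 12 := by omega
    rcases h24 with h | h
    · obtain ⟨c, rfl⟩ : ∃ c, s = 2*(12*c+10)+4 := ⟨s/24 - 1, by omega⟩
      apply aux (12*c+10) 14
      intro u
      have hk := key0b (c : ZMod 72) u
      push_cast
      exact hk
    · obtain ⟨c, rfl⟩ : ∃ c, s = 2*(12*c+4)+4 := ⟨s/24, by omega⟩
      apply aux (12*c+4) 23
      intro u
      have hk := key0a (c : ZMod 72) u
      push_cast
      exact hk
  · obtain ⟨c, rfl⟩ : ∃ c, s = 2*(6*c)+4 := ⟨s/12, by omega⟩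
    apply aux (6*c) 71
    intro u
    have hk := key4 (c : ZMod 72) u
    push_cast
    exact hk
end

section
/- The product of the first r primes, p₁p₂⋯p_r (with p₁ = 2), is a practical number for every natural number r ≥ 1; moreover p₁p₂⋯p_{i−1}·p_i^k·p_{i+1}⋯p_r is practical for any i ≤ r and k ≥ 1. -/
namespace Practical

theorem one : Practical 1 := by
  refine ⟨one_pos, fun m hm hm1 => ?_⟩
  obtain rfl : m = 1 := by omega
  exact ⟨{1}, by simp⟩

theorem exists_subset_sum {n m : ℕ} (hn : Practical n) (hm : m ≤ n) :
    ∃ S : Finset ℕ, (∀ d ∈ S, d ∣ n ∧ d ≤ m) ∧ ∑ d ∈ S, d = m := by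
  rcases Nat.eq_zero_or_pos m with rfl | hm0
  · exact ⟨∅, by simp⟩
  obtain ⟨S, hSdvd, hSsum⟩ := hn.2 m hm0 hm
  refine ⟨S, fun d hd => ⟨hSdvd d hd, ?_⟩, hSsum⟩
  exact hSsum ▸ Finset.single_le_sum (f := id) (fun _ _ => Nat.zero_le _) hd

theorem mul {n p : ℕ} (hn : Practical n) (hp : 0 < p) (hpn : p ≤ n + 1) :
    Practical (n * p) := by
  refine ⟨Nat.mul_pos hn.1 hp, fun m _ hm => ?_⟩
  have hmod : m % p < p := Nat.mod_lt m hp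
  have hdiv : m / p ≤ n := Nat.div_le_of_le_mul (by rwa [mul_comm])
  obtain ⟨S, hS, hSsum⟩ := hn.exists_subset_sum (m := m % p) (by omega)
  obtain ⟨T, hT, hTsum⟩ := hn.exists_subset_sum hdiv
  have hdisj : Disjoint S (T.image (p * ·)) := by
    refine Finset.disjoint_left.2 fun a haS haT => ?_
    obtain ⟨e, he, rfl⟩ := Finset.mem_image.1 haT
    have he_pos : 0 < e := Nat.pos_of_dvd_of_pos (hT e he).1 hn.1
    have := (hS _ haS).2
    nlinarith
  refine ⟨S ∪ T.image (p * ·), fun d hd => ?_, ?_⟩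
  · rcases Finset.mem_union.1 hd with hd | hd
    · exact (hS d hd).1.mul_right p
    · obtain ⟨e, he, rfl⟩ := Finset.mem_image.1 hd
      exact mul_comm n p ▸ mul_dvd_mul_left p (hT e he).1
  · rw [Finset.sum_union hdisj, Finset.sum_image fun a _ b _ h => Nat.eq_of_mul_eq_mul_left hp h,
      ← Finset.mul_sum, hSsum, hTsum, Nat.mod_add_div]

theorem mul_pow {n p : ℕ} (hn : Practical n) (hp : 0 < p) (hpn : p ≤ n + 1) (k : ℕ) :
    Practical (n * p ^ k) := by
  induction k with
  | zero => simpa using hn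
  | succ k ih =>
    rw [pow_succ, ← mul_assoc]
    exact ih.mul hp (hpn.trans (by gcongr; exact Nat.le_mul_of_pos_right n (Nat.pow_pos hp)))

end Practical

theorem Nat.nth_prime_le_prod_add_one (r : ℕ) :
    nth Prime r ≤ ∏ j ∈ Finset.range r, nth Prime j + 1 := by
  set N := ∏ j ∈ Finset.range r, nth Prime j + 1
  have hprod_pos : 0 < ∏ j ∈ Finset.range r, nth Prime j :=
    Finset.prod_pos fun j _ => (prime_nth_prime j).pos
  have hq : (minFac N).Prime := minFac_prime (by omega)
  have hq_not_dvd : ¬ minFac N ∣ ∏ j ∈ Finset.range r, nth Prime j := fun h =>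
    hq.ne_one (dvd_one.1 ((Nat.dvd_add_right h).1 (minFac_dvd N)))
  have hr_le : r ≤ count Prime (minFac N) := by
    by_contra! hlt
    exact hq_not_dvd (nth_count hq ▸ Finset.dvd_prod_of_mem _ (Finset.mem_range.2 hlt))
  calc nth Prime r ≤ nth Prime (count Prime (minFac N)) :=
        (nth_le_nth infinite_setOfPred_prime).2 hr_le
    _ = minFac N := nth_count hq
    _ ≤ N := minFac_le (by omega)

theorem practical_prod_nth_prime_pow {e : ℕ → ℕ} (r : ℕ) (he : ∀ j < r, e j ≠ 0) :
    Practical (∏ j ∈ Finset.range r, Nat.nth Nat.Prime j ^ e j) := by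
  induction r with
  | zero => exact Practical.one
  | succ r ih =>
    have hprimorial_le : ∏ j ∈ Finset.range r, Nat.nth Nat.Prime j ≤
        ∏ j ∈ Finset.range r, Nat.nth Nat.Prime j ^ e j :=
      Finset.prod_le_prod' fun j hj =>
        Nat.le_self_pow (he j (Nat.lt_succ_of_lt (Finset.mem_range.1 hj))) _
    rw [Finset.prod_range_succ]
    exact (ih fun j hj => he j (by omega)).mul_pow (Nat.prime_nth_prime r).pos
      ((Nat.nth_prime_le_prod_add_one r).trans (by omega)) (e r)

theorem stmt_16_general (r : ℕ) :
    Practical (∏ j ∈ Finset.range r, Nat.nth Nat.Prime j) ∧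
      ∀ i < r, ∀ k : ℕ, 1 ≤ k →
        Practical (∏ j ∈ Finset.range r,
          if j = i then Nat.nth Nat.Prime j ^ k else Nat.nth Nat.Prime j) := by
  refine ⟨by simpa using practical_prod_nth_prime_pow (e := fun _ => 1) r fun _ _ => one_ne_zero,
    fun i _ k hk => ?_⟩
  convert practical_prod_nth_prime_pow (e := fun j => if j = i then k else 1) r
    (fun j _ => by split_ifs <;> omega) using 2 with j
  split_ifs <;> simp

theorem stmt_16 (r : ℕ) (hr : 1 ≤ r) :
    Practical (∏ j ∈ Finset.range r, Nat.nth Nat.Prime j) ∧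
      ∀ i < r, ∀ k : ℕ, 1 ≤ k →
        Practical (∏ j ∈ Finset.range r,
          if j = i then Nat.nth Nat.Prime j ^ k else Nat.nth Nat.Prime j) :=
  stmt_16_general r
end
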